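/- arXiv:1906.05806 — 10 statements merged into one kernel-verified Lean document; each statement's English description precedes it below -/
import Mathlib

section
/- If m is an integer and T^m = X·Y·X⁻¹·Y⁻¹ for some X, Y in GL(2,ℤ), where T = [[1,1],[0,1]], then m is even. -/
open Matrix

def T2' : GL (Fin 2) ℤ :=
  ⟨!![1, 1; 0, 1], !![1, -1; 0, 1], by decide, by decide⟩

noncomputable def φ2 : GL (Fin 2) ℤ →* GL (Fin 2) (ZMod 2) :=
  Units.map ((Int.castRingHom (ZMod 2)).mapMatrix).toMonoidHom

noncomputable def sgn2 : GL (Fin 2) (ZMod 2) →* Multiplicative (ZMod 2) :=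
  MonoidHom.mk' (fun A => Multiplicative.ofAdd (if A ^ 3 = 1 then 0 else 1))
    (by decide)

/-- If `T^m = X·Y·X⁻¹·Y⁻¹` for some `X, Y ∈ GL(2,ℤ)`, then `m` is even. -/
theorem stmt_2 (m : ℤ) (X Y : GL (Fin 2) ℤ)
    (h : T2' ^ m = X * Y * X⁻¹ * Y⁻¹) : Even m := by
  have h2 := congrArg (sgn2.comp φ2) h
  simp only [_root_.map_mul, map_inv, map_zpow] at h2
  have habel : ∀ a b : Multiplicative (ZMod 2), a * b * a⁻¹ * b⁻¹ = 1 := by decide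
  rw [habel] at h2
  have hT : (sgn2.comp φ2) T2' = Multiplicative.ofAdd 1 := by decide
  rw [hT] at h2
  have : (m : ZMod 2) = 0 := by
    have := congrArg Multiplicative.toAdd h2
    simpa [← ofAdd_zsmul] using this
  rw [ZMod.intCast_zmod_eq_zero_iff_dvd] at this
  exact even_iff_two_dvd.mpr (by exact_mod_cast this)
end

section
/- For every nonzero integer m, the matrix T^m, where T = [[1,1],[0,1]], is not a commutator in SL(2,ℤ): there are no X, Y in SL(2,ℤ) with T^m = X⁻¹·Y·X·Y⁻¹. -/
open Matrix

noncomputable def T3 : Matrix.SpecialLinearGroup (Fin 2) ℤ :=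
  ⟨!![1, 1; 0, 1], by norm_num [Matrix.det_fin_two_of]⟩

/-!
Suppose `Y X Y⁻¹ = X T^m`. Conjugation preserves the trace and `tr (X T^m) = tr X + c m`, where
`c` is the lower-left entry of `X`; so `c = 0` and `X = ±T^k`. The sign cancels, leaving `T^k`
conjugate to `T^(k+m)`. But `g T^k = T^n g` forces `k = n`: either the lower-left entry of `g`
vanishes, so `g` is upper triangular with equal diagonal entries `±1`, or it does not, and then
`k = n = 0`.
-/

open scoped MatrixGroups

namespace ModularGroup

theorem exists_eq_T_zpow_or_neg_of_c_eq_zero {g : SL(2, ℤ)} (hc : g 1 0 = 0) :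
    ∃ n : ℤ, g = T ^ n ∨ g = -T ^ n := by
  have had : g 0 0 * g 1 1 = 1 := by
    have := g.det_coe
    rw [det_fin_two, hc] at this
    lia
  rcases Int.eq_one_or_neg_one_of_mul_eq_one' had with ⟨ha, hd⟩ | ⟨ha, hd⟩
  · refine ⟨g 0 1, Or.inl ?_⟩
    ext i j
    fin_cases i <;> fin_cases j <;> simp [ha, hc, hd, coe_T_zpow]
  · refine ⟨-g 0 1, Or.inr ?_⟩
    ext i j
    fin_cases i <;> fin_cases j <;> simp [ha, hc, hd, coe_T_zpow]

theorem c_eq_zero_of_conj_eq_mul_T_zpow {X Y : SL(2, ℤ)} {m : ℤ} (hm : m ≠ 0)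
    (h : Y * X * Y⁻¹ = X * T ^ m) : X 1 0 = 0 := by
  have htrace : trace ((X * T ^ m : SL(2, ℤ)) : Matrix (Fin 2) (Fin 2) ℤ) =
      trace (X : Matrix (Fin 2) (Fin 2) ℤ) := by
    rw [← h, Matrix.SpecialLinearGroup.coe_mul, Matrix.SpecialLinearGroup.coe_mul,
      trace_mul_cycle, ← Matrix.SpecialLinearGroup.coe_mul, inv_mul_cancel,
      Matrix.SpecialLinearGroup.coe_one, Matrix.one_mul]
  simpa [coe_T_zpow, trace_fin_two, mul_apply, Fin.sum_univ_two, hm] using htrace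

theorem isConj_T_zpow_iff {k n : ℤ} : IsConj (T ^ k) (T ^ n) ↔ k = n := by
  refine ⟨fun ⟨g, hg⟩ ↦ ?_, fun h ↦ h ▸ IsConj.refl _⟩
  have hentry (i j : Fin 2) : (↑(↑g * T ^ k) : Matrix (Fin 2) (Fin 2) ℤ) i j =
      (↑(T ^ n * ↑g) : Matrix (Fin 2) (Fin 2) ℤ) i j := by
    rw [hg.eq]
  have h00 := hentry 0 0
  have h01 := hentry 0 1
  have h11 := hentry 1 1
  simp only [Matrix.SpecialLinearGroup.coe_mul, coe_T_zpow, mul_apply, Fin.sum_univ_two, of_apply,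
    cons_val', cons_val_zero, cons_val_one, cons_val_fin_one] at h00 h01 h11
  have hdet := (g : SL(2, ℤ)).det_coe
  rw [det_fin_two] at hdet
  by_cases hc : (g : SL(2, ℤ)) 1 0 = 0
  · rw [hc, mul_zero, sub_zero] at hdet
    obtain ⟨ha, hd⟩ | ⟨ha, hd⟩ := Int.eq_one_or_neg_one_of_mul_eq_one' hdet <;>
      simp only [ha, hd] at h01 <;> linarith
  · have : n = 0 := by simpa [hc] using h00
    have : k = 0 := by simpa [hc] using h11
    omega

end ModularGroup

open ModularGroup

/-- For every nonzero integer `m`, `T^m` is not a commutator in `SL(2,ℤ)`. -/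
theorem stmt_3 (m : ℤ) (hm : m ≠ 0) :
    ¬ ∃ X Y : Matrix.SpecialLinearGroup (Fin 2) ℤ,
        T3 ^ m = X⁻¹ * Y * X * Y⁻¹ := by
  rintro ⟨X, Y, h⟩
  have hconj : Y * X * Y⁻¹ = X * T ^ m := by rw [show T = T3 from rfl, h]; group
  obtain ⟨k, hX⟩ :=
    exists_eq_T_zpow_or_neg_of_c_eq_zero (c_eq_zero_of_conj_eq_mul_T_zpow hm hconj)
  have hTk : Y * T ^ k * Y⁻¹ = T ^ (k + m) := by
    rw [_root_.zpow_add]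
    rcases hX with rfl | rfl
    · exact hconj
    · simpa only [neg_mul, mul_neg, neg_inj] using hconj
  have := isConj_T_zpow_iff.mp (isConj_iff.mpr ⟨Y, hTk⟩)
  omega
end

section
/- Let T be the matrix diag-block [[1,1],[0,1]] ⊕ I₂ in Sp(4,𝔽₂) (i.e. the 4×4 identity with an extra 1 in position (1,2)). Then T is not a commutator in Sp(4,𝔽₂): there exist no X, Y in Sp(4,𝔽₂) with T = X·Y·X⁻¹·Y⁻¹. -/
open Matrix

/-- The symplectic form matrix on `(𝔽₂)⁴` (signs are irrelevant mod 2). -/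
def J4 : Matrix (Fin 4) (Fin 4) (ZMod 2) :=
  !![0, 1, 0, 0; 1, 0, 0, 0; 0, 0, 0, 1; 0, 0, 1, 0]

/-- The elementary transvection `T = I₄ + E₁₂`. -/
def T4 : Matrix (Fin 4) (Fin 4) (ZMod 2) :=
  !![1, 1, 0, 0; 0, 1, 0, 0; 0, 0, 1, 0; 0, 0, 0, 1]

/-!
Over `𝔽₂` the quadratic forms with polar form `J` are `q_d(v) = ∑ dᵢ vᵢ² + v₀v₁ + v₂v₃`, one for
each `d ∈ 𝔽₂⁴`, and `Sp(4,𝔽₂)` permutes them by `q ↦ q ∘ X⁻¹`, preserving the number of zeros.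
On the six forms of Arf invariant one the transvection `T` fixes four and swaps two, so it acts
by an odd permutation, whereas every commutator acts by an even one.
-/

open Finset
open scoped commutatorElement

theorem MulAction.sign_toPerm_commutatorElement {G α : Type*} [Group G] [MulAction G α]
    [Fintype α] [DecidableEq α] (g h : G) :
    Equiv.Perm.sign (MulAction.toPerm ⁅g, h⁆ : Equiv.Perm α) = 1 := by
  rw [← MulAction.coe_toPermHom, ← MonoidHom.comp_apply, map_commutatorElement,
    commutatorElement_eq_one_iff_mul_comm]
  exact mul_comm _ _

namespace Matrix

variable {n R : Type*} [Fintype n] [CommRing R]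

theorem dotProduct_mulVec_self_eq_zero {A : Matrix n n R} (hdiag : A.diag = 0)
    (hskew : A + Aᵀ = 0) (v : n → R) : v ⬝ᵥ A *ᵥ v = 0 := by
  have hA : ∀ i j, A i j + A j i = 0 := fun i j => congrFun (congrFun hskew i) j
  have hsum : v ⬝ᵥ A *ᵥ v = ∑ p : n × n, v p.1 * A p.1 p.2 * v p.2 := by
    simp only [dotProduct, mulVec, Fintype.sum_prod_type, Finset.mul_sum, mul_assoc]
  rw [hsum]
  refine Finset.sum_involution (fun p _ => p.swap) (fun p _ => ?_) (fun p _ hp hfix => ?_)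
    (fun p _ => Finset.mem_univ _) (fun p _ => p.swap_swap)
  · simp only [Prod.fst_swap, Prod.snd_swap]
    linear_combination (v p.1 * v p.2) * hA p.1 p.2
  · refine hp ?_
    obtain ⟨i, j⟩ := p
    obtain rfl : j = i := congrArg Prod.fst hfix
    simp [show A j j = 0 from congrFun hdiag j]

theorem dotProduct_mulVec_self_congr {A B : Matrix n n R} (hdiag : A.diag = B.diag)
    (hsymm : A + Aᵀ = B + Bᵀ) (v : n → R) : v ⬝ᵥ A *ᵥ v = v ⬝ᵥ B *ᵥ v := by
  rw [← sub_eq_zero, ← dotProduct_sub, ← sub_mulVec]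
  refine dotProduct_mulVec_self_eq_zero ?_ ?_ v
  · rw [diag_sub, hdiag, sub_self]
  · rw [transpose_sub, sub_add_sub_comm, hsymm, sub_self]

theorem mulVec_dotProduct_mulVec_mulVec (A X : Matrix n n R) (v : n → R) :
    (X *ᵥ v) ⬝ᵥ A *ᵥ (X *ᵥ v) = v ⬝ᵥ (Xᵀ * A * X) *ᵥ v := by
  rw [← mulVec_mulVec, ← mulVec_mulVec, dotProduct_mulVec v, vecMul_transpose,
    dotProduct_mulVec]

theorem transpose_mul_mul_add_transpose (A X : Matrix n n R) :
    Xᵀ * A * X + (Xᵀ * A * X)ᵀ = Xᵀ * (A + Aᵀ) * X := by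
  simp only [transpose_mul, transpose_transpose, Matrix.mul_add, Matrix.add_mul, Matrix.mul_assoc]

theorem transpose_mul_mul_mul (J A B : Matrix n n R) :
    (A * B)ᵀ * J * (A * B) = Bᵀ * (Aᵀ * J * A) * B := by
  simp only [transpose_mul, Matrix.mul_assoc]

variable [DecidableEq n]

theorem isUnit_det_of_transpose_mul_mul_self_eq {J X : Matrix n n R} (hJ : IsUnit J.det)
    (hX : Xᵀ * J * X = J) : IsUnit X.det := by
  have h := congrArg det hX
  rw [det_mul, det_mul, det_transpose, mul_right_comm] at h
  exact IsUnit.of_mul_eq_one _ (hJ.mul_eq_right.mp h)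

def isometryGroup (J : Matrix n n R) : Subgroup (GL n R) where
  carrier := {g | (g : Matrix n n R)ᵀ * J * g = J}
  one_mem' := by simp
  mul_mem' {g h} (hg : (g : Matrix n n R)ᵀ * J * g = J)
      (hh : (h : Matrix n n R)ᵀ * J * h = J) := by
    change ((g * h : GL n R) : Matrix n n R)ᵀ * J * (g * h : GL n R) = J
    rw [Units.val_mul, transpose_mul_mul_mul, hg, hh]
  inv_mem' {g} (hg : (g : Matrix n n R)ᵀ * J * g = J) := by
    change ((g⁻¹ : GL n R) : Matrix n n R)ᵀ * J * (g⁻¹ : GL n R) = J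
    calc _ = ((g⁻¹ : GL n R) : Matrix n n R)ᵀ * ((g : Matrix n n R)ᵀ * J * g) *
          (g⁻¹ : GL n R) := by rw [hg]
      _ = J := by rw [← transpose_mul_mul_mul, ← Units.val_mul, mul_inv_cancel]; simp

instance (J : Matrix n n R) : CoeOut (isometryGroup J) (Matrix n n R) :=
  ⟨fun g => ((g : GL n R) : Matrix n n R)⟩

end Matrix

section QuadraticForm

variable {n R : Type*} [DecidableEq n] [CommRing R] {U : Matrix n n R}

variable (U) in
/-- For `U` with zero diagonal over a ring of characteristic two, `v ↦ vᵀ (diagonal d + U) v`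
runs through the quadratic forms with polar form `U + Uᵀ` as `d` varies, and `pullback U X d` is
the `d` of the form `v ↦ q_d (X v)`. -/
def quadMatrix (d : n → R) : Matrix n n R := diagonal d + U

theorem diag_quadMatrix (hU : U.diag = 0) (d : n → R) : (quadMatrix U d).diag = d := by
  simp [quadMatrix, hU]

theorem quadMatrix_add_transpose [CharP R 2] (d : n → R) :
    quadMatrix U d + (quadMatrix U d)ᵀ = U + Uᵀ := by
  rw [quadMatrix, transpose_add, diagonal_transpose, add_add_add_comm, diagonal_add]
  simp only [CharTwo.add_self_eq_zero, diagonal_zero, zero_add]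

variable [Fintype n]

variable (U)

def quadForm (d v : n → R) : R := v ⬝ᵥ quadMatrix U d *ᵥ v

def pullback (X : Matrix n n R) (d : n → R) : n → R := (Xᵀ * quadMatrix U d * X).diag

def zeroCount [Fintype R] [DecidableEq R] (d : n → R) : ℕ := #{v | quadForm U d v = 0}

variable {U}

theorem pullback_apply (X : Matrix n n R) (d : n → R) (i : n) :
    pullback U X d i = quadForm U d (Xᵀ i) := by
  rw [quadForm, dotProduct_mulVec]
  rfl

theorem pullback_one (hU : U.diag = 0) (d : n → R) : pullback U 1 d = d := by
  rw [pullback, transpose_one, Matrix.one_mul, Matrix.mul_one, diag_quadMatrix hU]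

theorem quadForm_pullback [CharP R 2] (hU : U.diag = 0) {X : Matrix n n R}
    (hX : Xᵀ * (U + Uᵀ) * X = U + Uᵀ) (d v : n → R) :
    quadForm U (pullback U X d) v = quadForm U d (X *ᵥ v) := by
  rw [quadForm, quadForm, mulVec_dotProduct_mulVec_mulVec]
  refine (dotProduct_mulVec_self_congr ?_ ?_ v).symm
  · rw [diag_quadMatrix hU, pullback]
  · rw [transpose_mul_mul_add_transpose, quadMatrix_add_transpose, quadMatrix_add_transpose, hX]

theorem pullback_mul [CharP R 2] (hU : U.diag = 0) {X : Matrix n n R}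
    (hX : Xᵀ * (U + Uᵀ) * X = U + Uᵀ) (Y : Matrix n n R) (d : n → R) :
    pullback U (X * Y) d = pullback U Y (pullback U X d) := by
  funext i
  rw [pullback_apply, pullback_apply, quadForm_pullback hU hX]
  rfl

theorem zeroCount_pullback [Fintype R] [DecidableEq R] [CharP R 2] (hU : U.diag = 0)
    (g : GL n R) (hg : (g : Matrix n n R)ᵀ * (U + Uᵀ) * g = U + Uᵀ) (d : n → R) :
    zeroCount U (pullback U g d) = zeroCount U d := by
  refine card_equiv
    ⟨((g : Matrix n n R) *ᵥ ·), ((g⁻¹ : GL n R) *ᵥ ·), fun v => ?_, fun v => ?_⟩ fun v => ?_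
  · simp [mulVec_mulVec]
  · simp [mulVec_mulVec]
  · simp [quadForm_pullback hU hg]

end QuadraticForm

def U4 : Matrix (Fin 4) (Fin 4) (ZMod 2) :=
  !![0, 1, 0, 0; 0, 0, 0, 0; 0, 0, 0, 1; 0, 0, 0, 0]

theorem diag_U4 : U4.diag = 0 := by decide

theorem U4_add_transpose : U4 + U4ᵀ = J4 := by decide

local notation "Sp₄" => isometryGroup J4
local notation "M₄" => Matrix (Fin 4) (Fin 4) (ZMod 2)

/-- The forms of Arf invariant `d₀d₁ + d₂d₃ = 1` have six zeros, the others ten. -/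
abbrev EllipticForm : Type := {d : Fin 4 → ZMod 2 // zeroCount U4 d = 6}

instance : MulAction Sp₄ EllipticForm where
  smul g d := ⟨pullback U4 ((g⁻¹ : Sp₄) : M₄) d.1, by
    rw [zeroCount_pullback diag_U4 _ (by rw [U4_add_transpose]; exact g⁻¹.2)]
    exact d.2⟩
  one_smul d := Subtype.ext (by
    change pullback U4 ((1⁻¹ : Sp₄) : M₄) d.1 = d.1
    rw [inv_one, OneMemClass.coe_one, Units.val_one, pullback_one diag_U4])
  mul_smul g h d := Subtype.ext (by
    change pullback U4 (((g * h)⁻¹ : Sp₄) : M₄) d.1 =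
      pullback U4 ((g⁻¹ : Sp₄) : M₄) (pullback U4 ((h⁻¹ : Sp₄) : M₄) d.1)
    rw [_root_.mul_inv_rev, Subgroup.coe_mul, Units.val_mul,
      pullback_mul diag_U4 (by rw [U4_add_transpose]; exact h⁻¹.2)])

theorem sign_toPerm_of_coe_eq_T4 {g : Sp₄} (hg : (g : M₄) = T4) :
    Equiv.Perm.sign (MulAction.toPerm g : Equiv.Perm EllipticForm) = -1 := by
  have hginv : ((g⁻¹ : Sp₄) : M₄) = T4 := by
    rw [Subgroup.coe_inv, coe_units_inv, hg]
    exact inv_eq_left_inv (by decide)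
  -- `T` only changes `d₁` to `d₀ + d₁ + 1`, so it moves exactly the two forms with `d₀ = 0`.
  have hswap : (MulAction.toPerm g : Equiv.Perm EllipticForm) =
      Equiv.swap ⟨![0, 0, 1, 1], by decide⟩ ⟨![0, 1, 1, 1], by decide⟩ := by
    ext d : 1
    apply Subtype.ext
    change pullback U4 _ d.1 = _
    rw [hginv]
    revert d
    decide
  rw [hswap, Equiv.Perm.sign_swap (by decide)]

/-- `T` is not a commutator in `Sp(4,𝔽₂)`. -/
theorem stmt_4 :
    ¬ ∃ X Y : Matrix (Fin 4) (Fin 4) (ZMod 2),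
        Xᵀ * J4 * X = J4 ∧ Yᵀ * J4 * Y = J4 ∧ X * Y * X⁻¹ * Y⁻¹ = T4 := by
  rintro ⟨X, Y, hX, hY, hXY⟩
  have hJ : IsUnit J4.det := by rw [show J4.det = 1 by decide]; exact isUnit_one
  let x : Sp₄ :=
    ⟨GeneralLinearGroup.mk'' X (isUnit_det_of_transpose_mul_mul_self_eq hJ hX), hX⟩
  let y : Sp₄ :=
    ⟨GeneralLinearGroup.mk'' Y (isUnit_det_of_transpose_mul_mul_self_eq hJ hY), hY⟩
  have hxy : ((⁅x, y⁆ : Sp₄) : M₄) = T4 := by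
    simpa [x, y, commutatorElement_def, coe_units_inv] using hXY
  have h := MulAction.sign_toPerm_commutatorElement (α := EllipticForm) x y
  rw [sign_toPerm_of_coe_eq_T4 hxy] at h
  exact absurd h (by decide)
end

section
/- Let T ∈ Sp(4,ℤ) be the matrix with 1's on the diagonal, a 1 in position (1,2), and 0's elsewhere. For an integer m, T^m is a commutator in Sp(4,ℤ) if and only if m is even. -/
open Matrix

/-- The standard symplectic form matrix on `ℤ⁴`. -/
def J5 : Matrix (Fin 4) (Fin 4) ℤ :=
  !![0, 1, 0, 0; -1, 0, 0, 0; 0, 0, 0, 1; 0, 0, -1, 0]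

/-- The elementary transvection `T = I₄ + E₁₂` in `Sp(4,ℤ)`. -/
def T5 : Matrix (Fin 4) (Fin 4) ℤ :=
  !![1, 1, 0, 0; 0, 1, 0, 0; 0, 0, 1, 0; 0, 0, 0, 1]

/-! ### Mod 2 theory: quadratic refinements of the symplectic form -/

abbrev F2 := ZMod 2

def Jb : Matrix (Fin 4) (Fin 4) F2 := !![0,1,0,0;1,0,0,0;0,0,0,1;0,0,1,0]

def q0 (v : Fin 4 → F2) : F2 := v 0 * v 1 + v 2 * v 3

def qf (c v : Fin 4 → F2) : F2 :=
  q0 v + (c 0 * v 0 + c 1 * v 1 + c 2 * v 2 + c 3 * v 3)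

def Fm (A : Matrix (Fin 4) (Fin 4) F2) (c : Fin 4 → F2) : Fin 4 → F2 :=
  fun i => qf c (fun j => A j i)

def Sympl2 (A : Matrix (Fin 4) (Fin 4) F2) : Prop := Aᵀ * Jb * A = Jb

lemma sqF2 : ∀ x : F2, x * x = x := by decide

lemma L1 {A : Matrix (Fin 4) (Fin 4) F2} (hA : Sympl2 A) (c v : Fin 4 → F2) :
    qf (Fm A c) v = qf c (A.mulVec v) := by
  have h01 := congrFun (congrFun hA 0) 1
  have h02 := congrFun (congrFun hA 0) 2
  have h03 := congrFun (congrFun hA 0) 3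
  have h12 := congrFun (congrFun hA 1) 2
  have h13 := congrFun (congrFun hA 1) 3
  have h23 := congrFun (congrFun hA 2) 3
  simp [Matrix.mul_apply, Fin.sum_univ_four, Jb, Matrix.transpose_apply] at h01 h02 h03 h12 h13 h23
  simp [qf, q0, Fm, Matrix.mulVec, dotProduct, Fin.sum_univ_four]
  linear_combination (-(A 0 0 * A 1 0 + A 2 0 * A 3 0)) * sqF2 (v 0)
    + (-(A 0 1 * A 1 1 + A 2 1 * A 3 1)) * sqF2 (v 1)
    + (-(A 0 2 * A 1 2 + A 2 2 * A 3 2)) * sqF2 (v 2)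
    + (-(A 0 3 * A 1 3 + A 2 3 * A 3 3)) * sqF2 (v 3)
    - (v 0 * v 1) * h01 - (v 0 * v 2) * h02 - (v 0 * v 3) * h03
    - (v 1 * v 2) * h12 - (v 1 * v 3) * h13 - (v 2 * v 3) * h23

lemma L3 {A : Matrix (Fin 4) (Fin 4) F2} (hA : Sympl2 A)
    (B : Matrix (Fin 4) (Fin 4) F2) (c : Fin 4 → F2) :
    Fm (A * B) c = Fm B (Fm A c) := by
  funext i
  show qf c (fun j => (A * B) j i) = qf (Fm A c) (fun j => B j i)
  have hv : (fun j => (A * B) j i) = A.mulVec (fun j => B j i) := by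
    funext j
    simp [Matrix.mul_apply, Matrix.mulVec, dotProduct]
  rw [hv]
  exact (L1 hA c _).symm

lemma L4 (c : Fin 4 → F2) : Fm 1 c = c := by
  funext i
  fin_cases i <;> simp [Fm, qf, q0, Matrix.one_apply]

def cnt (c : Fin 4 → F2) : ℕ :=
  (Finset.univ.filter fun v : Fin 4 → F2 => qf c v = 1).card

lemma cnt_iff : ∀ c : Fin 4 → F2, q0 c = 1 ↔ cnt c = 10 := by decide

lemma L5 {A A' : Matrix (Fin 4) (Fin 4) F2} (hA : Sympl2 A)
    (h1 : A * A' = 1) (h2 : A' * A = 1) {c : Fin 4 → F2} (hc : q0 c = 1) :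
    q0 (Fm A c) = 1 := by
  rw [cnt_iff] at hc ⊢
  rw [← hc]
  unfold cnt
  apply Finset.card_bij (fun v _ => A.mulVec v)
  · intro v hv
    simp only [Finset.mem_filter, Finset.mem_univ, true_and] at hv ⊢
    rw [← L1 hA]; exact hv
  · intro v _ w _ hvw
    have : A'.mulVec (A.mulVec v) = A'.mulVec (A.mulVec w) := by rw [hvw]
    rwa [Matrix.mulVec_mulVec, Matrix.mulVec_mulVec, h2, Matrix.one_mulVec,
      Matrix.one_mulVec] at this
  · intro w hw
    refine ⟨A'.mulVec w, ?_, ?_⟩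
    · simp only [Finset.mem_filter, Finset.mem_univ, true_and] at hw ⊢
      rw [L1 hA, Matrix.mulVec_mulVec, h1, Matrix.one_mulVec]
      exact hw
    · rw [Matrix.mulVec_mulVec, h1, Matrix.one_mulVec]

def Qodd := {c : Fin 4 → F2 // q0 c = 1}

instance : DecidableEq Qodd := by unfold Qodd; infer_instance
instance : Fintype Qodd := by unfold Qodd; infer_instance

def permOf (A A' : Matrix (Fin 4) (Fin 4) F2) (hA : Sympl2 A) (hA' : Sympl2 A')
    (h1 : A * A' = 1) (h2 : A' * A = 1) : Equiv.Perm Qodd where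
  toFun c := ⟨Fm A c.1, L5 hA h1 h2 c.2⟩
  invFun c := ⟨Fm A' c.1, L5 hA' h2 h1 c.2⟩
  left_inv c := by
    apply Subtype.ext
    show Fm A' (Fm A c.1) = c.1
    rw [← L3 hA, h1, L4]
  right_inv c := by
    apply Subtype.ext
    show Fm A (Fm A' c.1) = c.1
    rw [← L3 hA', h2, L4]


lemma sympl_mul {A B : Matrix (Fin 4) (Fin 4) F2} (hA : Sympl2 A) (hB : Sympl2 B) :
    Sympl2 (A * B) := by
  unfold Sympl2 at *
  have : (A * B)ᵀ * Jb * (A * B) = Bᵀ * (Aᵀ * Jb * A) * B := by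
    rw [Matrix.transpose_mul]; noncomm_ring
  rw [this, hA, hB]

lemma sympl_of_inv {A A' : Matrix (Fin 4) (Fin 4) F2} (hA : Sympl2 A)
    (h1 : A * A' = 1) : Sympl2 A' := by
  unfold Sympl2 at *
  calc A'ᵀ * Jb * A' = A'ᵀ * (Aᵀ * Jb * A) * A' := by rw [hA]
  _ = (A * A')ᵀ * Jb * (A * A') := by rw [Matrix.transpose_mul]; noncomm_ring
  _ = Jb := by rw [h1]; simp

lemma permOf_mul (A B A' B' : Matrix (Fin 4) (Fin 4) F2)
    (hA : Sympl2 A) (hB : Sympl2 B) (hA' : Sympl2 A') (hB' : Sympl2 B')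
    (h1 : A * A' = 1) (h2 : A' * A = 1) (h3 : B * B' = 1) (h4 : B' * B = 1)
    (hAB : Sympl2 (A * B)) (hBA' : Sympl2 (B' * A'))
    (g1 : (A * B) * (B' * A') = 1) (g2 : (B' * A') * (A * B) = 1) :
    permOf (A * B) (B' * A') hAB hBA' g1 g2 =
      (permOf A A' hA hA' h1 h2).trans (permOf B B' hB hB' h3 h4) := by
  apply Equiv.ext
  intro c
  apply Subtype.ext
  show Fm (A * B) c.1 = Fm B (Fm A c.1)
  exact L3 hA B c.1

lemma permOf_symm (A A' : Matrix (Fin 4) (Fin 4) F2) (hA : Sympl2 A) (hA' : Sympl2 A')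
    (h1 : A * A' = 1) (h2 : A' * A = 1) :
    (permOf A A' hA hA' h1 h2).symm = permOf A' A hA' hA h2 h1 := rfl

lemma permOf_congr (A N A' N' : Matrix (Fin 4) (Fin 4) F2) (hMN : A = N)
    (hA : Sympl2 A) (hA' : Sympl2 A') (h1 : A * A' = 1) (h2 : A' * A = 1)
    (hN : Sympl2 N) (hN' : Sympl2 N') (g1 : N * N' = 1) (g2 : N' * N = 1) :
    permOf A A' hA hA' h1 h2 = permOf N N' hN hN' g1 g2 := by
  apply Equiv.ext
  intro c
  apply Subtype.ext
  show Fm A c.1 = Fm N c.1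
  rw [hMN]

def Tb : Matrix (Fin 4) (Fin 4) F2 := !![1,1,0,0;0,1,0,0;0,0,1,0;0,0,0,1]

lemma Tb_sympl : Sympl2 Tb := by unfold Sympl2; decide
lemma Tb_inv : Tb * Tb = 1 := by decide

def sgn (A A' : Matrix (Fin 4) (Fin 4) F2) (hA : Sympl2 A) (hA' : Sympl2 A')
    (h1 : A * A' = 1) (h2 : A' * A = 1) : ℤˣ :=
  Equiv.Perm.sign (permOf A A' hA hA' h1 h2)

def cQ1 : Qodd := ⟨![0,0,1,1], by unfold q0; decide⟩
def cQ2 : Qodd := ⟨![0,1,1,1], by unfold q0; decide⟩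

lemma sign_Tb : Equiv.Perm.sign (permOf Tb Tb Tb_sympl Tb_sympl Tb_inv Tb_inv) = -1 := by
  have hperm : permOf Tb Tb Tb_sympl Tb_sympl Tb_inv Tb_inv = Equiv.swap cQ1 cQ2 :=
    Equiv.ext (by decide)
  rw [hperm]
  exact Equiv.Perm.sign_swap (by decide)

/-- The key mod-2 obstruction. -/
lemma core (mu : F2) {A B A' B' : Matrix (Fin 4) (Fin 4) F2}
    (hA : Sympl2 A) (hB : Sympl2 B) (hA' : Sympl2 A') (hB' : Sympl2 B')
    (h1 : A * A' = 1) (h2 : A' * A = 1) (h3 : B * B' = 1) (h4 : B' * B = 1)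
    (heq : !![1,mu,0,0;0,1,0,0;0,0,1,0;0,0,0,1] = A * B * (A' * B')) : mu = 0 := by
  rcases (show ∀ x : F2, x = 0 ∨ x = 1 by decide) mu with h | h
  · exact h
  subst h
  have hTb : Tb = A * B * (A' * B') := by
    rw [← heq]; decide
  exfalso
  -- signs
  have hABs : Sympl2 (A * B) := sympl_mul hA hB
  have hA'B's : Sympl2 (A' * B') := sympl_mul hA' hB'
  have hProd : Sympl2 ((A * B) * (A' * B')) := sympl_mul hABs hA'B's
  have hBA' : Sympl2 (B' * A') := sympl_mul hB' hA'
  have hBA : Sympl2 (B * A) := sympl_mul hB hA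
  have g1 : (A * B) * (B' * A') = 1 := by
    calc (A * B) * (B' * A') = A * (B * B') * A' := by noncomm_ring
    _ = 1 := by rw [h3, Matrix.mul_one, h1]
  have g2 : (B' * A') * (A * B) = 1 := by
    calc (B' * A') * (A * B) = B' * (A' * A) * B := by noncomm_ring
    _ = 1 := by rw [h2, Matrix.mul_one, h4]
  have g3 : (A' * B') * (B * A) = 1 := by
    calc (A' * B') * (B * A) = A' * (B' * B) * A := by noncomm_ring
    _ = 1 := by rw [h4, Matrix.mul_one, h2]
  have g4 : (B * A) * (A' * B') = 1 := by
    calc (B * A) * (A' * B') = B * (A * A') * B' := by noncomm_ring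
    _ = 1 := by rw [h1, Matrix.mul_one, h3]
  have gg1 : ((A * B) * (A' * B')) * ((B * A) * (B' * A')) = 1 := by
    calc ((A * B) * (A' * B')) * ((B * A) * (B' * A'))
        = (A * B) * ((A' * B') * (B * A)) * (B' * A') := by noncomm_ring
    _ = (A * B) * (B' * A') := by rw [g3, Matrix.mul_one]
    _ = 1 := g1
  have gg2 : ((B * A) * (B' * A')) * ((A * B) * (A' * B')) = 1 := by
    calc ((B * A) * (B' * A')) * ((A * B) * (A' * B'))
        = (B * A) * ((B' * A') * (A * B)) * (A' * B') := by noncomm_ring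
    _ = (B * A) * (A' * B') := by rw [g2, Matrix.mul_one]
    _ = 1 := g4
  have hBAB'A' : Sympl2 ((B * A) * (B' * A')) := sympl_mul hBA hBA'
  -- sign of the big product equals product of signs
  have e1 : permOf ((A * B) * (A' * B')) ((B * A) * (B' * A')) hProd hBAB'A' gg1 gg2 =
      (permOf (A * B) (B' * A') hABs hBA' g1 g2).trans
        (permOf (A' * B') (B * A) hA'B's hBA g3 g4) :=
    permOf_mul _ _ _ _ hABs hA'B's hBA' hBA g1 g2 g3 g4 _ _ _ _
  have e2 : permOf (A * B) (B' * A') hABs hBA' g1 g2 =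
      (permOf A A' hA hA' h1 h2).trans (permOf B B' hB hB' h3 h4) :=
    permOf_mul _ _ _ _ hA hB hA' hB' h1 h2 h3 h4 _ _ _ _
  have e3 : permOf (A' * B') (B * A) hA'B's hBA g3 g4 =
      (permOf A' A hA' hA h2 h1).trans (permOf B' B hB' hB h4 h3) :=
    permOf_mul _ _ _ _ hA' hB' hA hB h2 h1 h4 h3 _ _ _ _
  have hsymm1 : permOf A' A hA' hA h2 h1 = (permOf A A' hA hA' h1 h2).symm := rfl
  have hsymm2 : permOf B' B hB' hB h4 h3 = (permOf B B' hB hB' h3 h4).symm := rfl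
  have hcongr : permOf Tb Tb Tb_sympl Tb_sympl Tb_inv Tb_inv =
      permOf ((A * B) * (A' * B')) ((B * A) * (B' * A')) hProd hBAB'A' gg1 gg2 :=
    permOf_congr _ _ _ _ hTb _ _ _ _ _ _ _ _
  have sEq : ∀ (f g : Equiv.Perm Qodd),
      Equiv.Perm.sign (f.trans g) = Equiv.Perm.sign f * Equiv.Perm.sign g := by
    intro f g
    have : f.trans g = g * f := rfl
    rw [this, _root_.map_mul, mul_comm]
  set a := Equiv.Perm.sign (permOf A A' hA hA' h1 h2) with ha
  set b := Equiv.Perm.sign (permOf B B' hB hB' h3 h4) with hb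
  have s1 : Equiv.Perm.sign (permOf (A * B) (B' * A') hABs hBA' g1 g2) = a * b := by
    rw [e2, sEq]
  have s2 : Equiv.Perm.sign (permOf (A' * B') (B * A) hA'B's hBA g3 g4) = a * b := by
    rw [e3, sEq, hsymm1, hsymm2, Equiv.Perm.sign_symm, Equiv.Perm.sign_symm]
  have s3 : (-1 : ℤˣ) = a * b * (a * b) := by
    rw [← sign_Tb, hcongr, e1, sEq, s1, s2]
  rcases Int.units_eq_one_or (a * b) with h | h <;> rw [h] at s3 <;> exact absurd s3 (by decide)

/-! ### Integer side -/

def fT (a : ℤ) : Matrix (Fin 4) (Fin 4) ℤ := !![1,a,0,0;0,1,0,0;0,0,1,0;0,0,0,1]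

lemma fT_mul (a b : ℤ) : fT a * fT b = fT (a + b) := by
  ext i j
  fin_cases i <;> fin_cases j <;>
    simp [fT, Matrix.mul_apply, Fin.sum_univ_four]
  all_goals ring

lemma fT_zero : fT 0 = 1 := by decide

lemma T5_fT : T5 = fT 1 := by decide

lemma fT_pow (n : ℕ) : fT 1 ^ n = fT n := by
  induction n with
  | zero => simp [fT_zero]
  | succ n ih => rw [pow_succ, ih, fT_mul]; push_cast; ring_nf

lemma fT_right_inv (a : ℤ) : fT a * fT (-a) = 1 := by
  rw [fT_mul, add_neg_cancel, fT_zero]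

lemma T5_zpow (m : ℤ) : T5 ^ m = fT m := by
  obtain ⟨n, rfl | rfl⟩ := Int.eq_nat_or_neg m
  · rw [zpow_natCast, T5_fT, fT_pow]
  · rw [Matrix.zpow_neg_natCast, T5_fT, fT_pow]
    exact Matrix.inv_eq_right_inv (fT_right_inv _)

def Xw : Matrix (Fin 4) (Fin 4) ℤ := !![1,-2,-2,2; 0,1,0,0; 0,2,1,0; 0,-2,-2,1]
def Xwi : Matrix (Fin 4) (Fin 4) ℤ := !![1,2,-2,-2; 0,1,0,0; 0,-2,1,0; 0,-2,2,1]
def Uw : Matrix (Fin 4) (Fin 4) ℤ := !![1,-1,-1,-1; 0,1,0,0; 0,-1,1,0; 0,0,1,1]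
def Uwi : Matrix (Fin 4) (Fin 4) ℤ := !![1,1,0,1; 0,1,0,0; 0,1,1,0; 0,-1,-1,1]

lemma hXs : Xwᵀ * J5 * Xw = J5 := by decide
lemma hUs : Uwᵀ * J5 * Uw = J5 := by decide
lemma hXXi : Xw * Xwi = 1 := by decide
lemma hXiX : Xwi * Xw = 1 := by decide
lemma hUUi : Uw * Uwi = 1 := by decide
lemma hUiU : Uwi * Uw = 1 := by decide
lemma hXU : Xw * Uw = fT 2 * (Uw * Xw) := by decide
lemma hUT : Uw * fT 2 = fT 2 * Uw := by decide

lemma Upow_comm (n : ℕ) : Uw ^ n * fT 2 = fT 2 * Uw ^ n := by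
  induction n with
  | zero => simp
  | succ n ih =>
    rw [pow_succ, Matrix.mul_assoc, hUT, ← Matrix.mul_assoc, ih, Matrix.mul_assoc]

lemma XUpow (n : ℕ) : Xw * Uw ^ n = fT (2 * (n : ℤ)) * Uw ^ n * Xw := by
  induction n with
  | zero => simp [fT_zero]
  | succ n ih =>
    calc Xw * Uw ^ (n + 1) = (Xw * Uw ^ n) * Uw := by rw [pow_succ, Matrix.mul_assoc]
    _ = (fT (2 * n) * Uw ^ n * Xw) * Uw := by rw [ih]
    _ = (fT (2 * n) * Uw ^ n) * (Xw * Uw) := by noncomm_ring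
    _ = (fT (2 * n) * Uw ^ n) * (fT 2 * (Uw * Xw)) := by rw [hXU]
    _ = fT (2 * n) * (Uw ^ n * fT 2) * (Uw * Xw) := by noncomm_ring
    _ = fT (2 * n) * (fT 2 * Uw ^ n) * (Uw * Xw) := by rw [Upow_comm]
    _ = (fT (2 * n) * fT 2) * ((Uw ^ n * Uw) * Xw) := by noncomm_ring
    _ = fT (2 * ((n : ℤ) + 1)) * Uw ^ (n + 1) * Xw := by
        rw [fT_mul, ← pow_succ, ← Matrix.mul_assoc]
        have : 2 * (n : ℤ) + 2 = 2 * ((n : ℤ) + 1) := by ring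
        rw [this]
  
lemma UUi_pow (n : ℕ) : Uw ^ n * Uwi ^ n = 1 := by
  induction n with
  | zero => simp
  | succ n ih =>
    calc Uw ^ (n + 1) * Uwi ^ (n + 1) = Uw ^ n * (Uw * Uwi) * Uwi ^ n := by
          rw [pow_succ, pow_succ']; noncomm_ring
    _ = Uw ^ n * Uwi ^ n := by rw [hUUi, Matrix.mul_one]
    _ = 1 := ih

lemma UiU_pow (n : ℕ) : Uwi ^ n * Uw ^ n = 1 := by
  induction n with
  | zero => simp
  | succ n ih =>
    calc Uwi ^ (n + 1) * Uw ^ (n + 1) = Uwi ^ n * (Uwi * Uw) * Uw ^ n := by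
          rw [pow_succ, pow_succ']; noncomm_ring
    _ = Uwi ^ n * Uw ^ n := by rw [hUiU, Matrix.mul_one]
    _ = 1 := ih

lemma Usympl (n : ℕ) : (Uw ^ n)ᵀ * J5 * Uw ^ n = J5 := by
  induction n with
  | zero => simp
  | succ n ih =>
    calc (Uw ^ (n + 1))ᵀ * J5 * Uw ^ (n + 1)
        = Uwᵀ * ((Uw ^ n)ᵀ * J5 * Uw ^ n) * Uw := by
          rw [pow_succ, Matrix.transpose_mul]; noncomm_ring
    _ = Uwᵀ * J5 * Uw := by rw [ih]
    _ = J5 := hUs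

lemma key1 (n : ℕ) : Xw * Uw ^ n * Xwi * Uwi ^ n = fT (2 * (n : ℤ)) := by
  calc Xw * Uw ^ n * Xwi * Uwi ^ n
      = (Xw * Uw ^ n) * (Xwi * Uwi ^ n) := by noncomm_ring
  _ = (fT (2 * n) * Uw ^ n * Xw) * (Xwi * Uwi ^ n) := by rw [XUpow]
  _ = fT (2 * n) * Uw ^ n * (Xw * Xwi) * Uwi ^ n := by noncomm_ring
  _ = fT (2 * n) * (Uw ^ n * Uwi ^ n) := by rw [hXXi, Matrix.mul_one, Matrix.mul_assoc]
  _ = fT (2 * n) := by rw [UUi_pow, Matrix.mul_one]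

lemma key2 (n : ℕ) : Uw ^ n * Xw * Uwi ^ n * Xwi = fT (-(2 * (n : ℤ))) := by
  have h2 : Uw ^ n * Xw = fT (-(2 * (n : ℤ))) * (Xw * Uw ^ n) := by
    rw [XUpow]
    calc Uw ^ n * Xw = 1 * (Uw ^ n * Xw) := by rw [Matrix.one_mul]
    _ = (fT (-(2 * (n:ℤ))) * fT (2 * (n:ℤ))) * (Uw ^ n * Xw) := by
        rw [fT_mul, neg_add_cancel, fT_zero]
    _ = fT (-(2 * (n:ℤ))) * (fT (2 * (n:ℤ)) * Uw ^ n * Xw) := by noncomm_ring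
  calc Uw ^ n * Xw * Uwi ^ n * Xwi
      = (Uw ^ n * Xw) * (Uwi ^ n * Xwi) := by noncomm_ring
  _ = (fT (-(2 * (n:ℤ))) * (Xw * Uw ^ n)) * (Uwi ^ n * Xwi) := by rw [h2]
  _ = fT (-(2 * (n:ℤ))) * Xw * (Uw ^ n * Uwi ^ n) * Xwi := by noncomm_ring
  _ = fT (-(2 * (n:ℤ))) * (Xw * Xwi) := by rw [UUi_pow, Matrix.mul_one, Matrix.mul_assoc]
  _ = fT (-(2 * (n:ℤ))) := by rw [hXXi, Matrix.mul_one]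

lemma J5map : J5.map (Int.castRingHom F2) = Jb := by
  ext i j
  fin_cases i <;> fin_cases j <;> simp [J5, Jb, Matrix.map_apply] <;> decide

lemma fTmap (m : ℤ) : (fT m).map (Int.castRingHom F2) =
    !![1,(m : F2),0,0;0,1,0,0;0,0,1,0;0,0,0,1] := by
  ext i j
  fin_cases i <;> fin_cases j <;>
    simp [fT, Matrix.map_apply, Matrix.vecHead, Matrix.vecTail]

/-- `T^m` is a commutator in `Sp(4,ℤ)` if and only if `m` is even. -/
theorem stmt_5 (m : ℤ) :
    (∃ X Y : Matrix (Fin 4) (Fin 4) ℤ,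
        Xᵀ * J5 * X = J5 ∧ Yᵀ * J5 * Y = J5 ∧
          T5 ^ m = X * Y * X⁻¹ * Y⁻¹) ↔ Even m := by
  constructor
  · rintro ⟨X, Y, hX, hY, h⟩
    have hJJ : J5 * J5 = -1 := by decide
    -- explicit inverses
    have hXiX : (-(J5 * Xᵀ * J5)) * X = 1 := by
      have e : (-(J5 * Xᵀ * J5)) * X = -(J5 * (Xᵀ * J5 * X)) := by noncomm_ring
      rw [e, hX, hJJ]
      simp
    have hYiY : (-(J5 * Yᵀ * J5)) * Y = 1 := by
      have e : (-(J5 * Yᵀ * J5)) * Y = -(J5 * (Yᵀ * J5 * Y)) := by noncomm_ring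
      rw [e, hY, hJJ]
      simp
    have hXXi : X * (-(J5 * Xᵀ * J5)) = 1 := mul_eq_one_comm.mp hXiX
    have hYYi : Y * (-(J5 * Yᵀ * J5)) = 1 := mul_eq_one_comm.mp hYiY
    rw [Matrix.inv_eq_left_inv hXiX, Matrix.inv_eq_left_inv hYiY, T5_zpow] at h
    -- reduce mod 2
    have hmap := congrArg (fun M : Matrix (Fin 4) (Fin 4) ℤ =>
      M.map (Int.castRingHom F2)) h
    simp only [Matrix.map_mul] at hmap
    rw [fTmap] at hmap
    set π := Int.castRingHom F2 with hπ
    set A := X.map π with hA'def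
    set B := Y.map π with hB'def
    set A' := (-(J5 * Xᵀ * J5)).map π with hA2def
    set B' := (-(J5 * Yᵀ * J5)).map π with hB2def
    have J5map' : J5.map ⇑π = Jb := J5map
    have hsA : Sympl2 A := by
      have := congrArg (fun M : Matrix (Fin 4) (Fin 4) ℤ => M.map π) hX
      simp only [Matrix.map_mul, Matrix.transpose_map, J5map'] at this
      exact this
    have hsB : Sympl2 B := by
      have := congrArg (fun M : Matrix (Fin 4) (Fin 4) ℤ => M.map π) hY
      simp only [Matrix.map_mul, Matrix.transpose_map, J5map'] at this
      exact this
    have h1 : A * A' = 1 := by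
      have := congrArg (fun M : Matrix (Fin 4) (Fin 4) ℤ => M.map π) hXXi
      simp only [Matrix.map_mul] at this
      rw [this]
      exact Matrix.map_one _ (map_zero π) (map_one π)
    have h2 : A' * A = 1 := mul_eq_one_comm.mp h1
    have h3 : B * B' = 1 := by
      have := congrArg (fun M : Matrix (Fin 4) (Fin 4) ℤ => M.map π) hYYi
      simp only [Matrix.map_mul] at this
      rw [this]
      exact Matrix.map_one _ (map_zero π) (map_one π)
    have h4 : B' * B = 1 := mul_eq_one_comm.mp h3
    have hsA' : Sympl2 A' := sympl_of_inv hsA h1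
    have hsB' : Sympl2 B' := sympl_of_inv hsB h3
    have heq : !![1,(m : F2),0,0;0,1,0,0;0,0,1,0;0,0,0,1] = A * B * (A' * B') := by
      rw [hmap, Matrix.mul_assoc (A * B) A' B']
    have hmu := core (m : F2) hsA hsB hsA' hsB' h1 h2 h3 h4 heq
    have hdvd : (2 : ℤ) ∣ m := (ZMod.intCast_zmod_eq_zero_iff_dvd m 2).mp hmu
    obtain ⟨k, hk⟩ := hdvd
    exact ⟨k, by omega⟩
  · rintro ⟨k, hk⟩
    obtain ⟨n, hn | hn⟩ : ∃ n : ℕ, k = (n : ℤ) ∨ k = -(n : ℤ) := ⟨k.natAbs, Int.natAbs_eq k⟩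
    · refine ⟨Xw, Uw ^ n, hXs, Usympl n, ?_⟩
      rw [Matrix.inv_eq_left_inv hXiX, Matrix.inv_eq_left_inv (UiU_pow n),
        T5_zpow, hk, hn]
      have e : ((n : ℤ) + (n : ℤ)) = 2 * (n : ℤ) := by ring
      rw [e, ← key1]
    · refine ⟨Uw ^ n, Xw, Usympl n, hXs, ?_⟩
      rw [Matrix.inv_eq_left_inv (UiU_pow n), Matrix.inv_eq_left_inv hXiX,
        T5_zpow, hk, hn]
      have e : (-(n : ℤ) + -(n : ℤ)) = -(2 * (n : ℤ)) := by ring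
      rw [e, ← key2]
end

section
/- The matrix T (identity plus a 1 in position (1,2)) does not belong to the commutator subgroup of Sp(4,𝔽₂). -/
open Matrix

/-- The symplectic form matrix on `(𝔽₂)⁴`. -/
def J6' : Matrix (Fin 4) (Fin 4) (ZMod 2) :=
  !![0, 1, 0, 0; 1, 0, 0, 0; 0, 0, 0, 1; 0, 0, 1, 0]

def qF (d x : Fin 4 → ZMod 2) : ZMod 2 :=
  d 0 * x 0 + d 1 * x 1 + d 2 * x 2 + d 3 * x 3 + x 0 * x 1 + x 2 * x 3
def B (x y : Fin 4 → ZMod 2) : ZMod 2 := x ⬝ᵥ J6'.mulVec y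
lemma polar : ∀ d x y : Fin 4 → ZMod 2,
    qF d (x + y) = qF d x + qF d y + B x y := by decide
lemma qsmul : ∀ (c : ZMod 2) (d v : Fin 4 → ZMod 2), qF d (c • v) = c * qF d v := by decide
lemma Bsmul1 : ∀ (c : ZMod 2) (x y : Fin 4 → ZMod 2), B (c • x) y = c * B x y := by decide
lemma Bsmul2 : ∀ (c : ZMod 2) (x y : Fin 4 → ZMod 2), B x (c • y) = c * B x y := by decide
lemma Badd2 : ∀ (x y z : Fin 4 → ZMod 2), B x (y + z) = B x y + B x z := by decide

def e (i : Fin 4) : Fin 4 → ZMod 2 := Pi.single i 1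

def actM (M : Matrix (Fin 4) (Fin 4) (ZMod 2)) (d : Fin 4 → ZMod 2) : Fin 4 → ZMod 2 :=
  fun i => qF d (M.mulVec (e i))

lemma hB (M : Matrix (Fin 4) (Fin 4) (ZMod 2)) (hM : Mᵀ * J6' * M = J6') (u w : Fin 4 → ZMod 2) :
    B (M.mulVec u) (M.mulVec w) = B u w := by
  unfold B
  rw [mulVec_mulVec, dotProduct_mulVec, ← vecMul_transpose, vecMul_vecMul,
    ← Matrix.mul_assoc, hM, ← dotProduct_mulVec]

lemma key (M : Matrix (Fin 4) (Fin 4) (ZMod 2)) (hM : Mᵀ * J6' * M = J6')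
    (d x : Fin 4 → ZMod 2) : qF (actM M d) x = qF d (M.mulVec x) := by
  have hx : x = x 0 • e 0 + x 1 • e 1 + x 2 • e 2 + x 3 • e 3 := by
    funext j; fin_cases j <;> simp [e, Pi.single_apply]
  have hv : M.mulVec x
      = x 0 • M.mulVec (e 0) + (x 1 • M.mulVec (e 1) + (x 2 • M.mulVec (e 2) + x 3 • M.mulVec (e 3))) := by
    conv_lhs => rw [hx]
    simp [Matrix.mulVec_add, Matrix.mulVec_smul, add_assoc]
  rw [hv]
  simp only [polar, qsmul, Badd2, Bsmul1, Bsmul2]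
  have hBe : ∀ i j : Fin 4, B (M.mulVec (e i)) (M.mulVec (e j)) = B (e i) (e j) :=
    fun i j => hB M hM (e i) (e j)
  rw [hBe 0 1, hBe 0 2, hBe 0 3, hBe 1 2, hBe 1 3, hBe 2 3]
  have h01 : B (e 0) (e 1) = 1 := by decide
  have h02 : B (e 0) (e 2) = 0 := by decide
  have h03 : B (e 0) (e 3) = 0 := by decide
  have h12 : B (e 1) (e 2) = 0 := by decide
  have h13 : B (e 1) (e 3) = 0 := by decide
  have h23 : B (e 2) (e 3) = 1 := by decide
  rw [h01, h02, h03, h12, h13, h23]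
  have hL : qF (actM M d) x = qF d (M.mulVec (e 0)) * x 0 + qF d (M.mulVec (e 1)) * x 1
      + qF d (M.mulVec (e 2)) * x 2 + qF d (M.mulVec (e 3)) * x 3 + x 0 * x 1 + x 2 * x 3 := rfl
  rw [hL]
  ring

abbrev GL4 := GL (Fin 4) (ZMod 2)
abbrev M4 := Matrix (Fin 4) (Fin 4) (ZMod 2)

/-- symplectic subgroup -/
def Sp : Subgroup GL4 where
  carrier := {u | (u : M4)ᵀ * J6' * u = J6'}
  one_mem' := by simp
  mul_mem' := by
    intro a b ha hb
    show ((a * b : GL4) : M4)ᵀ * J6' * ((a * b : GL4) : M4) = J6'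
    rw [Units.val_mul, transpose_mul]
    calc (b:M4)ᵀ * (a : M4)ᵀ * J6' * ((a:M4) * b)
        = (b:M4)ᵀ * ((a : M4)ᵀ * J6' * a) * b := by simp only [Matrix.mul_assoc]
      _ = (b:M4)ᵀ * J6' * b := by rw [ha]
      _ = J6' := hb
  inv_mem' := by
    intro a ha
    show ((a⁻¹ : GL4) : M4)ᵀ * J6' * ((a⁻¹ : GL4) : M4) = J6'
    have h1 : (a : M4) * ((a⁻¹ : GL4) : M4) = 1 := by
      rw [← Units.val_mul, mul_inv_cancel, Units.val_one]
    set N := ((a⁻¹ : GL4) : M4)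
    calc Nᵀ * J6' * N = Nᵀ * ((a:M4)ᵀ * J6' * a) * N := by rw [ha]
      _ = ((a:M4) * N)ᵀ * J6' * ((a:M4) * N) := by
          rw [transpose_mul]; simp only [Matrix.mul_assoc]
      _ = J6' := by rw [h1]; simp

def isOdd (d : Fin 4 → ZMod 2) : Prop :=
  (Finset.univ.filter fun x : Fin 4 → ZMod 2 => qF d x = 1).card = 10

instance : DecidablePred isOdd := fun d => by unfold isOdd; infer_instance

def F6 := {d : Fin 4 → ZMod 2 // isOdd d}

instance : Fintype F6 := Subtype.fintype _
instance : DecidableEq F6 := Subtype.instDecidableEq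

lemma act_isOdd (u : GL4) (hu : u ∈ Sp) (d : Fin 4 → ZMod 2) (hd : isOdd d) :
    isOdd (actM u d) := by
  unfold isOdd at *
  have hk := key (u : M4) hu d
  calc (Finset.univ.filter fun x => qF (actM u d) x = 1).card
      = (Finset.univ.filter fun x => qF d ((u : M4).mulVec x) = 1).card := by
        congr 1; apply Finset.filter_congr; intro x _; rw [hk]
    _ = (Finset.univ.filter fun x => qF d x = 1).card := by
        apply Finset.card_bij' (fun x _ => (u : M4).mulVec x)
          (fun y _ => ((u⁻¹ : GL4) : M4).mulVec y)
        · intro x hx; simp only [Finset.mem_filter, Finset.mem_univ, true_and] at *; exact hx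
        · intro y hy; simp only [Finset.mem_filter, Finset.mem_univ, true_and] at *
          rw [mulVec_mulVec, ← Units.val_mul, mul_inv_cancel, Units.val_one, one_mulVec]
          exact hy
        · intro x _; rw [mulVec_mulVec, ← Units.val_mul, inv_mul_cancel, Units.val_one, one_mulVec]
        · intro y _; rw [mulVec_mulVec, ← Units.val_mul, mul_inv_cancel, Units.val_one, one_mulVec]
    _ = 10 := hd

lemma act_comp (M₁ M₂ : M4) (hM₁ : M₁ᵀ * J6' * M₁ = J6')
    (d : Fin 4 → ZMod 2) : actM M₂ (actM M₁ d) = actM (M₁ * M₂) d := by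
  funext i
  show qF (actM M₁ d) (M₂.mulVec (e i)) = qF d ((M₁ * M₂).mulVec (e i))
  rw [key M₁ hM₁, mulVec_mulVec]

lemma act_one : ∀ d : Fin 4 → ZMod 2, actM 1 d = d := by decide

lemma coe_inv_sp (g : Sp) : (((g⁻¹ : Sp) : GL4) : M4) = (((g : GL4)⁻¹ : GL4) : M4) := rfl

def phi : Sp →* Equiv.Perm F6 where
  toFun g :=
    { toFun := fun q => ⟨actM (((g⁻¹ : Sp) : GL4) : M4) q.1, act_isOdd _ (g⁻¹).2 q.1 q.2⟩
      invFun := fun q => ⟨actM ((g : GL4) : M4) q.1, act_isOdd _ g.2 q.1 q.2⟩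
      left_inv := by
        intro q
        apply Subtype.ext
        show actM _ (actM _ _) = _
        rw [act_comp _ _ ((g⁻¹ : Sp)).2, coe_inv_sp, ← Units.val_mul, inv_mul_cancel,
          Units.val_one, act_one]
      right_inv := by
        intro q
        apply Subtype.ext
        show actM _ (actM _ _) = _
        rw [act_comp _ _ g.2, coe_inv_sp, ← Units.val_mul, mul_inv_cancel,
          Units.val_one, act_one] }
  map_one' := by
    ext q
    apply Subtype.ext
    show actM _ _ = _
    rw [show (((1 : Sp)⁻¹ : Sp) : GL4) = (1 : GL4) by simp]
    show actM (1 : M4) _ = _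
    rw [act_one]
    rfl
  map_mul' := by
    intro g h
    ext q
    apply Subtype.ext
    show actM ((((g*h)⁻¹ : Sp) : GL4) : M4) q.1
        = actM (((g⁻¹ : Sp) : GL4) : M4) (actM (((h⁻¹ : Sp) : GL4) : M4) q.1)
    rw [act_comp _ _ ((h⁻¹ : Sp)).2, ← Units.val_mul]
    have : (((g*h)⁻¹ : Sp) : GL4) = ((h⁻¹ : Sp) : GL4) * ((g⁻¹ : Sp) : GL4) := by
      push_cast [_root_.mul_inv_rev]; rfl
    rw [this]

def eps : Sp →* ℤˣ := (Equiv.Perm.sign).comp phi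

/-- The transvection `T = I₄ + E₁₂` as an element of `GL(4,𝔽₂)`
(it is its own inverse mod 2). -/
def T6' : GL (Fin 4) (ZMod 2) :=
  ⟨!![1, 1, 0, 0; 0, 1, 0, 0; 0, 0, 1, 0; 0, 0, 0, 1],
   !![1, 1, 0, 0; 0, 1, 0, 0; 0, 0, 1, 0; 0, 0, 0, 1], by decide, by decide⟩

lemma hT : T6' ∈ Sp := by
  change ((T6' : M4)ᵀ * J6' * (T6' : M4) = J6')
  decide

def a1 : F6 := ⟨![0,0,1,1], by decide⟩
def b1 : F6 := ⟨![0,1,1,1], by decide⟩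

lemma phiT : phi ⟨T6', hT⟩ = Equiv.swap a1 b1 := by
  apply Equiv.ext
  decide

lemma epsT : eps ⟨T6', hT⟩ = -1 := by
  show Equiv.Perm.sign (phi ⟨T6', hT⟩) = -1
  rw [phiT, Equiv.Perm.sign_swap (by decide)]

/-- `T` does not belong to the commutator subgroup of `Sp(4,𝔽₂)`,
i.e. to the subgroup generated by all commutators of symplectic matrices. -/
theorem stmt_6 :
    T6' ∉ Subgroup.closure
        {g : GL (Fin 4) (ZMod 2) |
          ∃ X Y : GL (Fin 4) (ZMod 2),
            (X : Matrix (Fin 4) (Fin 4) (ZMod 2))ᵀ * J6' * X = J6' ∧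
            (Y : Matrix (Fin 4) (Fin 4) (ZMod 2))ᵀ * J6' * Y = J6' ∧
            g = X * Y * X⁻¹ * Y⁻¹} := by
  intro h
  have hcomm : ∀ a b : ℤˣ, a * b * a⁻¹ * b⁻¹ = 1 := fun a b => by
    rw [mul_right_comm a b a⁻¹, mul_inv_cancel, one_mul, mul_inv_cancel]
  set K : Subgroup GL4 := Subgroup.map Sp.subtype eps.ker with hK
  have hS : {g : GL (Fin 4) (ZMod 2) |
          ∃ X Y : GL (Fin 4) (ZMod 2),
            (X : Matrix (Fin 4) (Fin 4) (ZMod 2))ᵀ * J6' * X = J6' ∧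
            (Y : Matrix (Fin 4) (Fin 4) (ZMod 2))ᵀ * J6' * Y = J6' ∧
            g = X * Y * X⁻¹ * Y⁻¹} ⊆ ↑K := by
    rintro g ⟨X, Y, hX, hY, rfl⟩
    refine ⟨⟨X, hX⟩ * ⟨Y, hY⟩ * (⟨X, hX⟩ : Sp)⁻¹ * (⟨Y, hY⟩ : Sp)⁻¹, ?_, ?_⟩
    · show eps _ = 1
      simp only [_root_.map_mul, _root_.map_inv]
      exact hcomm _ _
    · rfl
  have hle : Subgroup.closure _ ≤ K := (Subgroup.closure_le K).2 hS
  obtain ⟨s, hs, hsv⟩ := hle h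
  have hse : s = ⟨T6', hT⟩ := Subtype.ext hsv
  rw [hse] at hs
  have h1 : eps ⟨T6', hT⟩ = 1 := hs
  rw [epsT] at h1
  exact absurd h1 (by decide)
end

section
/- The group Sp(4,𝔽₂) is isomorphic to the symmetric group S₆. -/
/-!
`S₆` permutes the coordinates of `𝔽₂⁶`, preserving the dot product, the even-weight hyperplane
`H` and the line `⟨(1,…,1)⟩ ⊆ H`, which is the radical of the dot product on `H`. Hence `S₆` acts
symplectically on the 4-dimensional space `V = H/⟨(1,…,1)⟩`, and a symplectic basis of `V` turns
this into a homomorphism `S₆ → Sp(4,𝔽₂)`. It is injective: a permutation acting trivially on `V`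
permutes the rows of the lifted basis matrix up to a common translation, which forces it to be the
identity. Conversely a symplectic matrix is the same as an ordered symplectic basis of columns,
and there are `15 · 8 · 3 · 2 = 720 = 6!` of those.
-/

open Matrix

/-- The symplectic form matrix on `(𝔽₂)⁴`. -/
def J8 : Matrix (Fin 4) (Fin 4) (ZMod 2) :=
  !![0, 1, 0, 0; 1, 0, 0, 0; 0, 0, 0, 1; 0, 0, 1, 0]

private lemma sp_aux (J A B : Matrix (Fin 4) (Fin 4) (ZMod 2))
    (ha : Aᵀ * J * A = J) (hone : A * B = 1) : Bᵀ * J * B = J := by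
  have : Bᵀ * (Aᵀ * J * A) * B = (A * B)ᵀ * J * (A * B) := by
    simp only [Matrix.transpose_mul, Matrix.mul_assoc]
  rw [ha] at this
  rw [this, hone]
  simp

/-- The symplectic group `Sp(4,𝔽₂)` as a subgroup of `GL(4,𝔽₂)`. -/
def Sp4F2 : Subgroup (GL (Fin 4) (ZMod 2)) where
  carrier := {X | (X : Matrix (Fin 4) (Fin 4) (ZMod 2))ᵀ * J8 * X = J8}
  one_mem' := by simp
  mul_mem' := by
    intro a b ha hb
    show ((a * b : GL (Fin 4) (ZMod 2)) :
        Matrix (Fin 4) (Fin 4) (ZMod 2))ᵀ * J8 * ((a * b : GL (Fin 4) (ZMod 2)) :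
        Matrix (Fin 4) (Fin 4) (ZMod 2)) = J8
    have : ((b : Matrix (Fin 4) (Fin 4) (ZMod 2))ᵀ *
        ((a : Matrix (Fin 4) (Fin 4) (ZMod 2))ᵀ * J8 * a)) * b = J8 := by
      rw [ha]; exact hb
    simpa only [Units.val_mul, Matrix.transpose_mul, Matrix.mul_assoc] using this
  inv_mem' := by
    intro a ha
    exact sp_aux J8 (a : Matrix (Fin 4) (Fin 4) (ZMod 2))
      ((a⁻¹ : GL (Fin 4) (ZMod 2)) : Matrix (Fin 4) (Fin 4) (ZMod 2)) ha
      (by rw [← Units.val_mul, mul_inv_cancel, Units.val_one])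

open Equiv

section PermMatrix

variable {n R : Type*} [Fintype n] [DecidableEq n] [NonAssocSemiring R] (ι : Type*)
  (σ : Perm n)

lemma permMatrix_mul_replicateCol_one :
    σ.permMatrix R * replicateCol ι (1 : n → R) = replicateCol ι 1 := by
  rw [PEquiv.toMatrix_toPEquiv_mul]; rfl

lemma replicateRow_one_mul_permMatrix :
    replicateRow ι (1 : n → R) * σ.permMatrix R = replicateRow ι 1 := by
  rw [PEquiv.mul_toMatrix_toPEquiv]; rfl

lemma transpose_permMatrix_mul_self : (σ.permMatrix R)ᵀ * σ.permMatrix R = 1 := by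
  rw [transpose_permMatrix, ← permMatrix_mul, mul_inv_cancel, permMatrix_one]

end PermMatrix

def symplecticForm (u v : Fin 4 → ZMod 2) : ZMod 2 :=
  u 0 * v 1 + u 1 * v 0 + u 2 * v 3 + u 3 * v 2

lemma transpose_mul_J8_mul_apply (M : Matrix (Fin 4) (Fin 4) (ZMod 2)) (i j : Fin 4) :
    (Mᵀ * J8 * M) i j = symplecticForm (Mᵀ i) (Mᵀ j) := by
  simp only [J8, mul_apply, transpose_apply, of_apply, Fin.sum_univ_four, cons_val',
    cons_val_fin_one, cons_val_zero, cons_val_one, cons_val, symplecticForm]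
  ring

/-- `𝔽₂⁴` listed through binary expansions, so that the kernel can enumerate it quickly. -/
def vectorsF2 : List (Fin 4 → ZMod 2) :=
  (List.range 16).map fun n i => if n.testBit i then 1 else 0

lemma mem_vectorsF2 (v : Fin 4 → ZMod 2) : v ∈ vectorsF2 := by
  revert v; decide

def symplecticBasisMatrices : List (Matrix (Fin 4) (Fin 4) (ZMod 2)) :=
  vectorsF2.flatMap fun a =>
  (vectorsF2.filter fun b => symplecticForm a b = 1).flatMap fun b =>
  (vectorsF2.filter fun c => symplecticForm a c = 0 ∧ symplecticForm b c = 0).flatMap fun c =>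
  (vectorsF2.filter fun d =>
    symplecticForm a d = 0 ∧ symplecticForm b d = 0 ∧ symplecticForm c d = 1).map
    fun d => (of ![a, b, c, d])ᵀ

set_option maxRecDepth 100000 in
lemma length_symplecticBasisMatrices : symplecticBasisMatrices.length = 720 := by
  decide

lemma mem_symplecticBasisMatrices {M : Matrix (Fin 4) (Fin 4) (ZMod 2)}
    (hM : Mᵀ * J8 * M = J8) : M ∈ symplecticBasisMatrices := by
  have hω : ∀ i j, symplecticForm (Mᵀ i) (Mᵀ j) = J8 i j := fun i j => by
    rw [← transpose_mul_J8_mul_apply, hM]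
  simp only [symplecticBasisMatrices, List.mem_flatMap, List.mem_filter, List.mem_map,
    mem_vectorsF2, true_and, decide_eq_true_eq]
  refine ⟨Mᵀ 0, Mᵀ 1, by simp [hω, J8], Mᵀ 2, by simp [hω, J8], Mᵀ 3, by simp [hω, J8], ?_⟩
  ext i j
  fin_cases j <;> rfl

lemma card_Sp4F2_le : Nat.card Sp4F2 ≤ 720 := by
  let toMatrix (X : Sp4F2) : symplecticBasisMatrices.toFinset :=
    ⟨X.1, List.mem_toFinset.2 (mem_symplecticBasisMatrices X.2)⟩
  calc Nat.card Sp4F2 ≤ Nat.card symplecticBasisMatrices.toFinset :=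
        Nat.card_le_card_of_injective toMatrix fun X Y h =>
          Subtype.ext (Units.ext (congrArg Subtype.val h))
    _ = symplecticBasisMatrices.toFinset.card := Nat.card_eq_finsetCard _
    _ ≤ symplecticBasisMatrices.length := List.toFinset_card_le _
    _ = 720 := length_symplecticBasisMatrices

abbrev ones : Matrix (Fin 6) (Fin 1) (ZMod 2) := replicateCol (Fin 1) 1

/-- `liftV` has columns `e₀+e₁, e₁+e₂, e₃+e₄, e₄+e₅ ∈ H`, lifting a symplectic basis of
`V = H/⟨ones⟩`; on `H`, `coordV` computes coordinates in that basis. -/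
def liftV : Matrix (Fin 6) (Fin 4) (ZMod 2) :=
  !![1, 0, 0, 0; 1, 1, 0, 0; 0, 1, 0, 0; 0, 0, 1, 0; 0, 0, 1, 1; 0, 0, 0, 1]

def coordV : Matrix (Fin 4) (Fin 6) (ZMod 2) :=
  !![0, 1, 1, 0, 0, 0; 0, 0, 1, 1, 1, 1; 0, 0, 0, 0, 1, 1; 0, 0, 0, 1, 1, 0]

lemma coordV_mul_liftV : coordV * liftV = 1 := by decide

lemma coordV_mul_ones : coordV * ones = 0 := by decide

lemma ones_transpose_mul_liftV : onesᵀ * liftV = 0 := by decide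

lemma ones_transpose_mul_ones : onesᵀ * ones = 0 := by decide

lemma liftV_transpose_mul_liftV : liftVᵀ * liftV = J8 := by decide

lemma liftV_mul_coordV : liftV * coordV =
    1 + ones * !![(0 : ZMod 2), 0, 0, 1, 1, 1] + !![(1 : ZMod 2); 0; 0; 0; 0; 0] * onesᵀ := by
  decide

lemma exists_liftV_mul_coordV_mul {Z : Matrix (Fin 6) (Fin 4) (ZMod 2)} (hZ : onesᵀ * Z = 0) :
    ∃ R : Matrix (Fin 1) (Fin 4) (ZMod 2), liftV * (coordV * Z) = Z + ones * R :=
  ⟨_, by rw [← Matrix.mul_assoc, liftV_mul_coordV, Matrix.add_mul, Matrix.add_mul,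
    Matrix.one_mul, Matrix.mul_assoc, Matrix.mul_assoc, hZ, Matrix.mul_zero, add_zero]⟩

lemma gram_add_ones_mul {Z : Matrix (Fin 6) (Fin 4) (ZMod 2)} (hZ : onesᵀ * Z = 0)
    (R : Matrix (Fin 1) (Fin 4) (ZMod 2)) :
    (Z + ones * R)ᵀ * (Z + ones * R) = Zᵀ * Z := by
  have hZ' : Zᵀ * ones = 0 := by
    rw [← transpose_transpose ones, ← transpose_mul, hZ, transpose_zero]
  simp only [transpose_add, transpose_mul, Matrix.add_mul, Matrix.mul_add, Matrix.mul_assoc,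
    ← Matrix.mul_assoc Zᵀ, ← Matrix.mul_assoc onesᵀ, hZ, hZ', ones_transpose_mul_ones,
    Matrix.zero_mul, Matrix.mul_zero, add_zero]

lemma ones_transpose_mul_permMatrix_mul_liftV (σ : Perm (Fin 6)) :
    onesᵀ * (σ.permMatrix (ZMod 2) * liftV) = 0 := by
  rw [← Matrix.mul_assoc, transpose_replicateCol, replicateRow_one_mul_permMatrix,
    ← transpose_replicateCol, ones_transpose_mul_liftV]

/-- The action of `S₆` on `V` in the basis lifted by `liftV`. -/
def symplecticRep : Perm (Fin 6) →* Matrix (Fin 4) (Fin 4) (ZMod 2) where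
  toFun σ := coordV * (σ⁻¹.permMatrix (ZMod 2) * liftV)
  map_one' := by rw [inv_one, permMatrix_one, Matrix.one_mul, coordV_mul_liftV]
  map_mul' σ τ := by
    obtain ⟨R, hR⟩ := exists_liftV_mul_coordV_mul (ones_transpose_mul_permMatrix_mul_liftV τ⁻¹)
    simp only [Matrix.mul_assoc coordV, Matrix.mul_assoc _ liftV]
    rw [hR, Matrix.mul_add, ← Matrix.mul_assoc _ ones, permMatrix_mul_replicateCol_one,
      Matrix.mul_add, ← Matrix.mul_assoc coordV ones, coordV_mul_ones, Matrix.zero_mul,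
      add_zero, _root_.mul_inv_rev, permMatrix_mul, Matrix.mul_assoc]

lemma exists_liftV_mul_symplecticRep (σ : Perm (Fin 6)) :
    ∃ R : Matrix (Fin 1) (Fin 4) (ZMod 2),
      liftV * symplecticRep σ = σ⁻¹.permMatrix (ZMod 2) * liftV + ones * R :=
  exists_liftV_mul_coordV_mul (ones_transpose_mul_permMatrix_mul_liftV _)

lemma symplecticRep_symplectic (σ : Perm (Fin 6)) :
    (symplecticRep σ)ᵀ * J8 * symplecticRep σ = J8 := by
  obtain ⟨R, hR⟩ := exists_liftV_mul_symplecticRep σ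
  calc (symplecticRep σ)ᵀ * J8 * symplecticRep σ
      = (liftV * symplecticRep σ)ᵀ * (liftV * symplecticRep σ) := by
        rw [← liftV_transpose_mul_liftV, transpose_mul]; simp only [Matrix.mul_assoc]
    _ = (σ⁻¹.permMatrix (ZMod 2) * liftV)ᵀ * (σ⁻¹.permMatrix (ZMod 2) * liftV) := by
        rw [hR, gram_add_ones_mul (ones_transpose_mul_permMatrix_mul_liftV _)]
    _ = J8 := by
        rw [transpose_mul, Matrix.mul_assoc, ← Matrix.mul_assoc _ _ liftV,
          transpose_permMatrix_mul_self, Matrix.one_mul, liftV_transpose_mul_liftV]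

lemma eq_zero_of_forall_liftV_eq_add (r : Fin 4 → ZMod 2)
    (h : ∀ i, ∃ i', liftV i = liftV i' + r) : r = 0 := by
  revert r; decide

lemma liftV_injective : Function.Injective liftV :=
  List.nodup_ofFn.1 (by decide)

lemma symplecticRep_injective : Function.Injective symplecticRep := by
  refine (injective_iff_map_eq_one symplecticRep).2 fun σ hσ => ?_
  obtain ⟨R, hR⟩ := exists_liftV_mul_symplecticRep σ
  have hrow (i : Fin 6) : liftV i = liftV (σ⁻¹ i) + R 0 := funext fun j => by
    have := congrFun (congrFun hR i) j
    rw [hσ, Matrix.mul_one] at this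
    simpa [PEquiv.toMatrix_toPEquiv_mul, mul_apply] using this
  have hR0 := eq_zero_of_forall_liftV_eq_add _ fun i => ⟨_, hrow i⟩
  rw [← inv_eq_one]
  ext i : 1
  have := hrow i
  rw [hR0, add_zero] at this
  exact liftV_injective this.symm

def permToSp4F2 : Perm (Fin 6) →* Sp4F2 :=
  symplecticRep.toHomUnits.codRestrict Sp4F2 symplecticRep_symplectic

lemma permToSp4F2_injective : Function.Injective permToSp4F2 := fun _ _ h =>
  symplecticRep_injective (congrArg (fun X : Sp4F2 => (X : GL (Fin 4) (ZMod 2)).val) h)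

/-- `Sp(4,𝔽₂)` is isomorphic to the symmetric group `S₆`. -/
theorem stmt_8 : Nonempty (Sp4F2 ≃* Equiv.Perm (Fin 6)) := by
  have hperm : Nat.card (Perm (Fin 6)) = 720 := by rw [Nat.card_perm, Nat.card_fin]; rfl
  have hcard : Nat.card (Perm (Fin 6)) = Nat.card Sp4F2 :=
    le_antisymm (Nat.card_le_card_of_injective _ permToSp4F2_injective)
      (hperm ▸ card_Sp4F2_le)
  exact ⟨(MulEquiv.ofBijective permToSp4F2
    ((Nat.bijective_iff_injective_and_card _).2 ⟨permToSp4F2_injective, hcard⟩)).symm⟩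
end

section
/- Every linear combination of 2×2 symmetric matrices over 𝔽₂ of the form T − X·T·Xᵀ (with T symmetric, X ∈ GL(2,𝔽₂)) has rank 0 or 2 (i.e. is never of rank 1). -/
open Matrix

lemma aux2 : ∀ a b c : ZMod 2, a + b + c = 0 → ¬(a = 0 ∧ b = 0 ∧ c = 0) →
    IsUnit (a * c - b * b) := by decide

/-- Every linear combination of `2×2` symmetric matrices over `𝔽₂` of the form
`T - X·T·Xᵀ` (with `T` symmetric and `X ∈ GL(2,𝔽₂)`) has rank `0` or `2`. -/
theorem stmt_10 (M : Matrix (Fin 2) (Fin 2) (ZMod 2))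
    (hM : M ∈ Submodule.span (ZMod 2)
      {N : Matrix (Fin 2) (Fin 2) (ZMod 2) |
        ∃ (T X : Matrix (Fin 2) (Fin 2) (ZMod 2)),
          T.IsSymm ∧ IsUnit X.det ∧ N = T - X * T * Xᵀ}) :
    M.rank = 0 ∨ M.rank = 2 := by
  have key : M 0 1 = M 1 0 ∧ M 0 0 + M 0 1 + M 1 1 = 0 := by
    induction hM using Submodule.span_induction with
    | mem N hN =>
      obtain ⟨T, X, hT, hX, rfl⟩ := hN
      have hdet : X 0 0 * X 1 1 - X 0 1 * X 1 0 = 1 := by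
        rw [Matrix.det_fin_two] at hX
        have : ∀ x : ZMod 2, IsUnit x → x = 1 := by decide
        exact this _ hX
      have hb : T 1 0 = T 0 1 := hT.apply 0 1
      have key2 : ∀ a b c p q r s : ZMod 2, p*s - q*r = 1 →
          ((p*a+q*b)*p + (p*b+q*c)*q) + ((p*a+q*b)*r + (p*b+q*c)*s)
            + ((r*a+s*b)*r + (r*b+s*c)*s) = a + b + c ∧
          (p*a+q*b)*r + (p*b+q*c)*s = (r*a+s*b)*p + (r*b+s*c)*q := by decide
      obtain ⟨k1, k2⟩ := key2 (T 0 0) (T 0 1) (T 1 1) (X 0 0) (X 0 1) (X 1 0) (X 1 1) hdet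
      constructor
      · simp only [Matrix.sub_apply, Matrix.mul_apply, Matrix.transpose_apply,
          Fin.sum_univ_two, hb]
        linear_combination -k2
      · simp only [Matrix.sub_apply, Matrix.mul_apply, Matrix.transpose_apply,
          Fin.sum_univ_two, hb]
        linear_combination -k1
    | zero => simp
    | add x y _ _ hx hy =>
      refine ⟨by simp [Matrix.add_apply, hx.1, hy.1], ?_⟩
      simp only [Matrix.add_apply]
      linear_combination hx.2 + hy.2
    | smul a x _ hx =>
      refine ⟨by simp [Matrix.smul_apply, hx.1], ?_⟩
      simp only [Matrix.smul_apply, smul_eq_mul]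
      linear_combination a * hx.2
  obtain ⟨hs, hf⟩ := key
  by_cases h0 : M = 0
  · left; simp [h0, Matrix.rank_zero]
  · right
    have hdet : IsUnit M.det := by
      rw [Matrix.det_fin_two, ← hs]
      apply aux2 _ _ _ hf
      rintro ⟨h1, h2, h3⟩
      apply h0
      have h4 : M 1 0 = 0 := hs ▸ h2
      ext i j
      fin_cases i <;> fin_cases j <;> simp only [Matrix.zero_apply] <;> assumption
    rw [Matrix.rank_of_isUnit _ ((Matrix.isUnit_iff_isUnit_det M).mpr hdet)]
    simp
end

section
/- Let k be a field, m ≠ 0 in k, and suppose X, Y ∈ Sp(4,k) satisfy X·Y·X⁻¹·Y⁻¹ = I + mΔ, where Δ is the matrix with a single 1 in position (1,2). Then X·e₁, Y·e₁, X·Y·e₁ and Y·X·e₁ all lie in e₁^⊥ (the symplectic orthogonal of the first basis vector). -/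
open Matrix

/-!
If `X Y X⁻¹ Y⁻¹ = I + mΔ` is a transvection, then `XY = (I + mΔ) YX`. Since `tr ((I + mΔ) B)
= tr B + m B₂₁` and left multiplication by `I + mΔ` leaves row 2 alone, comparing traces of the
conjugate pairs `XY ~ YX`, `XYX⁻¹ ~ Y` and `X ~ YXY⁻¹` forces the `(2,1)` entries of `YX`, `XY`,
`Y` and `X` to vanish; and `(e₁ | v)` is exactly the second coordinate of `v`.
-/

namespace Matrix

variable {n R : Type*} [Fintype n] [DecidableEq n] [CommRing R] {i j : n}

theorem trace_transvection_mul (c : R) (B : Matrix n n R) :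
    trace (transvection i j c * B) = trace B + c * B j i := by
  rw [transvection, add_mul, one_mul, trace_add, trace_single_mul, smul_eq_mul]

theorem apply_eq_zero_of_transvection_mul_eq_of_trace_eq [NoZeroDivisors R] (hij : i ≠ j)
    {c : R} (hc : c ≠ 0) {A B : Matrix n n R} (h : transvection i j c * B = A)
    (htr : trace A = trace B) : A j i = 0 ∧ B j i = 0 := by
  rw [← h, trace_transvection_mul, add_eq_left, mul_eq_zero] at htr
  have hB : B j i = 0 := htr.resolve_left hc
  exact ⟨by rwa [← h, transvection_mul_apply_of_ne _ _ _ _ hij.symm], hB⟩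

/-- `⁻¹` is the nonsingular inverse, which is `0` on singular matrices; a commutator of determinant
`1` therefore only arises from invertible matrices. -/
theorem isUnit_det_of_commutator_eq_transvection (hij : i ≠ j) {c : R} {X Y : Matrix n n R}
    (h : X * Y * X⁻¹ * Y⁻¹ = transvection i j c) : IsUnit X.det ∧ IsUnit Y.det := by
  have hunit : IsUnit (X * Y * X⁻¹ * Y⁻¹).det := by
    rw [h, det_transvection_of_ne _ _ hij]
    exact isUnit_one
  simp only [det_mul, IsUnit.mul_iff] at hunit
  exact ⟨hunit.1.1.1, hunit.1.1.2⟩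

theorem apply_eq_zero_of_commutator_eq_transvection [NoZeroDivisors R] (hij : i ≠ j) {c : R}
    (hc : c ≠ 0) {X Y : Matrix n n R} (h : X * Y * X⁻¹ * Y⁻¹ = transvection i j c) :
    X j i = 0 ∧ Y j i = 0 ∧ (X * Y) j i = 0 ∧ (Y * X) j i = 0 := by
  obtain ⟨hX, hY⟩ := isUnit_det_of_commutator_eq_transvection hij h
  have hXY : transvection i j c * (Y * X) = X * Y := by
    rw [← h, mul_assoc, nonsing_inv_mul_cancel_left Y X hY, nonsing_inv_mul_cancel_right X _ hX]
  have hXYX : transvection i j c * Y = X * Y * X⁻¹ := by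
    rw [← h, nonsing_inv_mul_cancel_right Y _ hY]
  have hXconj : transvection i j c * (Y * X * Y⁻¹) = X := by
    rw [← mul_assoc, hXY, mul_nonsing_inv_cancel_right Y X hY]
  obtain ⟨hXYji, hYXji⟩ :=
    apply_eq_zero_of_transvection_mul_eq_of_trace_eq hij hc hXY (trace_mul_comm X Y)
  obtain ⟨-, hYji⟩ := apply_eq_zero_of_transvection_mul_eq_of_trace_eq hij hc hXYX
    (by rw [trace_mul_cycle, nonsing_inv_mul X hX, one_mul])
  obtain ⟨hXji, -⟩ := apply_eq_zero_of_transvection_mul_eq_of_trace_eq hij hc hXconj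
    (by rw [trace_mul_cycle, nonsing_inv_mul Y hY, one_mul])
  exact ⟨hXji, hYji, hXYji, hYXji⟩

end Matrix

theorem stmt_11_general {k : Type*} [Field k] (m : k) (hm : m ≠ 0)
    (J : Matrix (Fin 4) (Fin 4) k)
    (hJ : J = !![0, 1, 0, 0; -1, 0, 0, 0; 0, 0, 0, 1; 0, 0, -1, 0])
    (Δ : Matrix (Fin 4) (Fin 4) k)
    (hΔ : Δ = !![0, 1, 0, 0; 0, 0, 0, 0; 0, 0, 0, 0; 0, 0, 0, 0])
    (e₁ : Fin 4 → k) (he₁ : e₁ = ![1, 0, 0, 0])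
    (X Y : Matrix (Fin 4) (Fin 4) k)
    (hcomm : X * Y * X⁻¹ * Y⁻¹ = 1 + m • Δ) :
    e₁ ⬝ᵥ (J *ᵥ (X *ᵥ e₁)) = 0 ∧
    e₁ ⬝ᵥ (J *ᵥ (Y *ᵥ e₁)) = 0 ∧
    e₁ ⬝ᵥ (J *ᵥ ((X * Y) *ᵥ e₁)) = 0 ∧
    e₁ ⬝ᵥ (J *ᵥ ((Y * X) *ᵥ e₁)) = 0 := by
  have hT : 1 + m • Δ = transvection 0 1 m := by
    subst hΔ
    ext a b
    fin_cases a <;> fin_cases b <;> simp [transvection]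
  have hpairing (M : Matrix (Fin 4) (Fin 4) k) : e₁ ⬝ᵥ (J *ᵥ (M *ᵥ e₁)) = M 1 0 := by
    subst hJ he₁
    simp [dotProduct, mulVec, Fin.sum_univ_four]
  simp only [hpairing]
  exact apply_eq_zero_of_commutator_eq_transvection (by decide) hm (hcomm.trans hT)

/-- If `X, Y ∈ Sp(4,k)` satisfy `X·Y·X⁻¹·Y⁻¹ = I + m·Δ` with `m ≠ 0`, then
`X·e₁`, `Y·e₁`, `X·Y·e₁`, `Y·X·e₁` all lie in the symplectic orthogonal of `e₁`. -/
theorem stmt_11 {k : Type*} [Field k] (m : k) (hm : m ≠ 0)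
    (J : Matrix (Fin 4) (Fin 4) k)
    (hJ : J = !![0, 1, 0, 0; -1, 0, 0, 0; 0, 0, 0, 1; 0, 0, -1, 0])
    (Δ : Matrix (Fin 4) (Fin 4) k)
    (hΔ : Δ = !![0, 1, 0, 0; 0, 0, 0, 0; 0, 0, 0, 0; 0, 0, 0, 0])
    (e₁ : Fin 4 → k) (he₁ : e₁ = ![1, 0, 0, 0])
    (X Y : Matrix (Fin 4) (Fin 4) k)
    (hX : Xᵀ * J * X = J) (hY : Yᵀ * J * Y = J)
    (hcomm : X * Y * X⁻¹ * Y⁻¹ = 1 + m • Δ) :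
    e₁ ⬝ᵥ (J *ᵥ (X *ᵥ e₁)) = 0 ∧
    e₁ ⬝ᵥ (J *ᵥ (Y *ᵥ e₁)) = 0 ∧
    e₁ ⬝ᵥ (J *ᵥ ((X * Y) *ᵥ e₁)) = 0 ∧
    e₁ ⬝ᵥ (J *ᵥ ((Y * X) *ᵥ e₁)) = 0 :=
  stmt_11_general m hm J hJ Δ hΔ e₁ he₁ X Y hcomm
end

section
/- For every g ≥ 3 and every integer m, the matrix T₁^m = I_{2g} + m·Δ (Δ having a single 1 in position (1,2)) is a commutator in Sp(2g,ℤ). -/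
/-!
In `Sp(6, ℤ)` there are explicit matrices `X`, `Y` whose commutator is
`1 + m • single 0 1 1`, provided `2p + m² = m`, which is solvable in `p` since `m(m - 1)` is even.
For `g = 3 + k`, the symplectic form `Jmat g` is the direct sum of `Jmat 3` and `Jmat k`, so
`X ↦ X ⊕ 1` embeds `Sp(6, ℤ)` into `Sp(2g, ℤ)` as a group homomorphism, carrying the commutator
to the required one.
-/

open Matrix

/-- The block-diagonal symplectic form matrix of size `2g`:
`g` diagonal blocks `!![0,1;-1,0]`. -/
def Jmat (g : ℕ) : Matrix (Fin (2 * g)) (Fin (2 * g)) ℤ :=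
  Matrix.of fun i j =>
    if (i : ℕ) + 1 = (j : ℕ) ∧ Even (i : ℕ) then 1
    else if (j : ℕ) + 1 = (i : ℕ) ∧ Even (j : ℕ) then -1 else 0

def finTwoMulAddEquiv (a b : ℕ) : Fin (2 * a) ⊕ Fin (2 * b) ≃ Fin (2 * (a + b)) :=
  finSumFinEquiv.trans (finCongr (mul_add 2 a b).symm)

@[simp] lemma finTwoMulAddEquiv_inl_val {a b : ℕ} (i : Fin (2 * a)) :
    (finTwoMulAddEquiv a b (Sum.inl i) : ℕ) = i := rfl

@[simp] lemma finTwoMulAddEquiv_inr_val {a b : ℕ} (j : Fin (2 * b)) :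
    (finTwoMulAddEquiv a b (Sum.inr j) : ℕ) = 2 * a + j := rfl

lemma Jmat_add (a b : ℕ) :
    Jmat (a + b) = reindex (finTwoMulAddEquiv a b) (finTwoMulAddEquiv a b)
      (fromBlocks (Jmat a) 0 0 (Jmat b)) := by
  ext i j
  obtain ⟨i, rfl⟩ := (finTwoMulAddEquiv a b).surjective i
  obtain ⟨j, rfl⟩ := (finTwoMulAddEquiv a b).surjective j
  rcases i with i | i <;> rcases j with j | j <;>
    simp only [Jmat, reindex_apply, submatrix_apply, Equiv.symm_apply_apply, of_apply,
      fromBlocks_apply₁₁, fromBlocks_apply₁₂, fromBlocks_apply₂₁, fromBlocks_apply₂₂,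
      Matrix.zero_apply, finTwoMulAddEquiv_inl_val, finTwoMulAddEquiv_inr_val, Nat.even_iff] <;>
    split_ifs <;> omega

section Stabilize

variable {R : Type*} [CommRing R] {a : ℕ}

def stabilize (b : ℕ) (X : Matrix (Fin (2 * a)) (Fin (2 * a)) R) :
    Matrix (Fin (2 * (a + b))) (Fin (2 * (a + b))) R :=
  reindex (finTwoMulAddEquiv a b) (finTwoMulAddEquiv a b) (fromBlocks X 0 0 1)

variable (b : ℕ)

lemma stabilize_one : stabilize b (1 : Matrix (Fin (2 * a)) (Fin (2 * a)) R) = 1 := by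
  simp [stabilize]

lemma stabilize_mul (X Y : Matrix (Fin (2 * a)) (Fin (2 * a)) R) :
    stabilize b (X * Y) = stabilize b X * stabilize b Y := by
  simp [stabilize, fromBlocks_multiply, submatrix_mul_equiv]

lemma stabilize_inv_of_mul_eq_one {X Y : Matrix (Fin (2 * a)) (Fin (2 * a)) R} (h : X * Y = 1) :
    (stabilize b X)⁻¹ = stabilize b Y :=
  inv_eq_right_inv (by rw [← stabilize_mul, h, stabilize_one])

lemma stabilize_one_add_single (i j : Fin (2 * a)) (c : R) :
    stabilize b (1 + single i j c) =
      1 + single (finTwoMulAddEquiv a b (.inl i)) (finTwoMulAddEquiv a b (.inl j)) c := by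
  ext x y
  obtain ⟨x, rfl⟩ := (finTwoMulAddEquiv a b).surjective x
  obtain ⟨y, rfl⟩ := (finTwoMulAddEquiv a b).surjective y
  rcases x with x | x <;> rcases y with y | y <;> simp [stabilize, one_apply, single_apply]

lemma stabilize_symplectic {X : Matrix (Fin (2 * a)) (Fin (2 * a)) ℤ}
    (hX : Xᵀ * Jmat a * X = Jmat a) :
    (stabilize b X)ᵀ * Jmat (a + b) * stabilize b X = Jmat (a + b) := by
  simp [stabilize, Jmat_add, fromBlocks_transpose, fromBlocks_multiply, submatrix_mul_equiv,
    hX]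

end Stabilize

def commX (m p : ℤ) : Matrix (Fin (2 * 3)) (Fin (2 * 3)) ℤ :=
  !![p,  0, 1, 0,      -m, 0;
     0,  0, 0, 1,       0, 0;
     1,  0, 0, 0,       0, 0;
     0,  1, 0, -p-m*m,  0, -m;
     -m, 0, 0, 0,      -1, 0;
     0,  0, 0, -m,      0, -1]

def commXInv (m p : ℤ) : Matrix (Fin (2 * 3)) (Fin (2 * 3)) ℤ :=
  !![0,  0, 1,      0,  0, 0;
     0,  p, 0,      1,  0, -m;
     1,  0, -p-m*m, 0, -m, 0;
     0,  1, 0,      0,  0, 0;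
     0,  0, -m,     0, -1, 0;
     0, -m, 0,      0,  0, -1]

def commY : Matrix (Fin (2 * 3)) (Fin (2 * 3)) ℤ :=
  !![1,0,0,1,0,0; 0,1,0,0,0,0; 0,1,1,0,0,0; 0,0,0,1,0,0; 0,0,0,0,1,1; 0,0,0,0,0,1]

def commYInv : Matrix (Fin (2 * 3)) (Fin (2 * 3)) ℤ :=
  !![1,0,0,-1,0,0; 0,1,0,0,0,0; 0,-1,1,0,0,0; 0,0,0,1,0,0; 0,0,0,0,1,-1; 0,0,0,0,0,1]

lemma Jmat_three : Jmat 3 =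
    !![0,1,0,0,0,0; -1,0,0,0,0,0; 0,0,0,1,0,0; 0,0,-1,0,0,0; 0,0,0,0,0,1; 0,0,0,0,-1,0] := by
  decide

lemma commX_symplectic (m p : ℤ) : (commX m p)ᵀ * Jmat 3 * commX m p = Jmat 3 := by
  rw [Jmat_three]
  ext i j
  fin_cases i <;> fin_cases j <;> simp [commX, mul_apply, Fin.sum_univ_succ]

lemma commY_symplectic : commYᵀ * Jmat 3 * commY = Jmat 3 := by
  decide

lemma commX_mul_commXInv (m p : ℤ) : commX m p * commXInv m p = 1 := by
  ext i j
  fin_cases i <;> fin_cases j <;> simp [commX, commXInv, mul_apply, Fin.sum_univ_succ, one_apply]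

lemma commY_mul_commYInv : commY * commYInv = 1 := by
  decide

set_option maxHeartbeats 2000000 in
lemma commX_commY_commutator (m p : ℤ) (hp : 2 * p + m * m = m) :
    commX m p * commY * commXInv m p * commYInv = 1 + single 0 1 m := by
  ext i j
  fin_cases i <;> fin_cases j <;>
    simp [commX, commXInv, commY, commYInv, mul_apply, Fin.sum_univ_six, one_apply, single]
  linear_combination hp

/-- For every `g ≥ 3` and every integer `m`, the matrix `T₁^m = I + m·Δ`
(`Δ` having a single `1` in position `(1,2)`) is a commutator in `Sp(2g,ℤ)`. -/
theorem stmt_14 (g : ℕ) (hg : 3 ≤ g) (m : ℤ) :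
    ∃ X Y : Matrix (Fin (2 * g)) (Fin (2 * g)) ℤ,
      Xᵀ * Jmat g * X = Jmat g ∧ Yᵀ * Jmat g * Y = Jmat g ∧
        X * Y * X⁻¹ * Y⁻¹ =
          1 + m • Matrix.single
            (⟨0, by omega⟩ : Fin (2 * g)) (⟨1, by omega⟩ : Fin (2 * g)) (1 : ℤ) := by
  obtain ⟨k, rfl⟩ : ∃ k, g = 3 + k := ⟨g - 3, by omega⟩
  obtain ⟨q, hq⟩ := Int.even_mul_pred_self m
  have hp : 2 * -q + m * m = m := by linear_combination hq
  refine ⟨stabilize k (commX m (-q)), stabilize k commY,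
    stabilize_symplectic k (commX_symplectic m (-q)), stabilize_symplectic k commY_symplectic, ?_⟩
  rw [stabilize_inv_of_mul_eq_one k (commX_mul_commXInv m (-q)),
    stabilize_inv_of_mul_eq_one k commY_mul_commYInv, ← stabilize_mul, ← stabilize_mul,
    ← stabilize_mul, commX_commY_commutator m (-q) hp, stabilize_one_add_single, smul_single,
    smul_eq_mul, mul_one]
  rfl
end

section
/- The matrix T₂ ∈ Sp(4,ℤ) (identity with extra 1's in positions (1,2) and (3,4)) is a commutator: with X = [[0,0,1,0],[0,1,0,1],[1,0,-1,0],[0,1,0,0]] and Y = [[1,-1,0,-1],[0,1,0,0],[0,-1,1,0],[0,0,0,1]], one has X, Y ∈ Sp(4,ℤ) and X·Y·X⁻¹·Y⁻¹ = T₂. -/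
open Matrix

/-- The symplectic form matrix on `ℤ⁴`. -/
def J16 : Matrix (Fin 4) (Fin 4) ℤ :=
  !![0, 1, 0, 0; -1, 0, 0, 0; 0, 0, 0, 1; 0, 0, -1, 0]

/-- `T₂`: the identity with extra `1`'s in positions `(1,2)` and `(3,4)`. -/
def T16 : Matrix (Fin 4) (Fin 4) ℤ :=
  !![1, 1, 0, 0; 0, 1, 0, 0; 0, 0, 1, 1; 0, 0, 0, 1]

/-- `T₂` is a commutator in `Sp(4,ℤ)`, via the explicit matrices `X` and `Y`. -/
theorem stmt_16 (X Y : Matrix (Fin 4) (Fin 4) ℤ)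
    (hXdef : X = !![0, 0, 1, 0; 0, 1, 0, 1; 1, 0, -1, 0; 0, 1, 0, 0])
    (hYdef : Y = !![1, -1, 0, -1; 0, 1, 0, 0; 0, -1, 1, 0; 0, 0, 0, 1]) :
    Xᵀ * J16 * X = J16 ∧ Yᵀ * J16 * Y = J16 ∧ X * Y * X⁻¹ * Y⁻¹ = T16 := by
  subst hXdef hYdef
  have hXi : (!![0, 0, 1, 0; 0, 1, 0, 1; 1, 0, -1, 0; 0, 1, 0, 0] :
      Matrix (Fin 4) (Fin 4) ℤ)⁻¹ =
      !![1, 0, 1, 0; 0, 0, 0, 1; 1, 0, 0, 0; 0, 1, 0, -1] := by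
    apply inv_eq_right_inv
    decide
  have hYi : (!![1, -1, 0, -1; 0, 1, 0, 0; 0, -1, 1, 0; 0, 0, 0, 1] :
      Matrix (Fin 4) (Fin 4) ℤ)⁻¹ =
      !![1, 1, 0, 1; 0, 1, 0, 0; 0, 1, 1, 0; 0, 0, 0, 1] := by
    apply inv_eq_right_inv
    decide
  refine ⟨by decide, by decide, ?_⟩
  rw [hXi, hYi]
  decide
end
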